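/- arXiv:2202.11659 — 7 statements merged into one kernel-verified Lean document; each statement's English description precedes it below -/
import Mathlib

section
/- Let f : ℝ^d → ℝ be differentiable with inf_{x ∈ ℝ^d} f(x) finite. Suppose there exists a differentiable map Ψ : ℝ^{n_ν} → ℝ^d such that (i) Ψ is surjective and (ii) the composition f_cvx(ν) := f(Ψ(ν)) is convex on ℝ^{n_ν}. Then every first-order stationary point of f is globally optimal: for every x ∈ ℝ^d with ∇f(x) = 0 one has f(x) = inf_{x' ∈ ℝ^d} f(x'). -/
/-!
If `x = Ψ ν` is a stationary point of `f`, the chain rule makes `ν` a stationary point of the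
convex function `f ∘ Ψ`, hence a global minimiser of it (the first-order condition for convexity,
obtained by restricting to lines); surjectivity of `Ψ` turns this into global minimality of `x`.
-/

open Set

section FirstOrderCondition

variable {E : Type*} [NormedAddCommGroup E] [NormedSpace ℝ E] {s : Set E} {g : E → ℝ}
  {x y : E}

theorem ConvexOn.add_fderiv_le {g' : E →L[ℝ] ℝ} (hg : ConvexOn ℝ s g) (hx : x ∈ s) (hy : y ∈ s)
    (hg' : HasFDerivAt g g' x) :
    g x + g' (y - x) ≤ g y := by
  let ℓ : ℝ →ᵃ[ℝ] E := AffineMap.lineMap x y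
  have hline : ConvexOn ℝ (ℓ ⁻¹' s) (g ∘ ℓ) := hg.comp_affineMap ℓ
  have hderiv : HasDerivAt (g ∘ ℓ) (g' (y - x)) 0 :=
    hg'.comp_hasDerivAt_of_eq (0 : ℝ) AffineMap.hasDerivAt_lineMap (by simp [ℓ])
  have hslope : slope (g ∘ ℓ) 0 1 = g y - g x := by simp [slope_def_field, ℓ]
  have := hline.le_slope_of_hasDerivAt (by simpa [ℓ] using hx) (by simpa [ℓ] using hy)
    zero_lt_one hderiv
  linarith

theorem ConvexOn.isMinOn_of_hasFDerivAt_eq_zero (hg : ConvexOn ℝ s g) (hx : x ∈ s)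
    (hg' : HasFDerivAt g (0 : E →L[ℝ] ℝ) x) :
    IsMinOn g s x := fun y hy => by
  simpa using hg.add_fderiv_le hx hy hg'

end FirstOrderCondition

theorem stmt_0_general {d nν : ℕ} (f : EuclideanSpace ℝ (Fin d) → ℝ)
    (hf : Differentiable ℝ f)
    (Ψ : EuclideanSpace ℝ (Fin nν) → EuclideanSpace ℝ (Fin d))
    (hΨ : Differentiable ℝ Ψ) (hΨsurj : Function.Surjective Ψ)
    (hconv : ConvexOn ℝ Set.univ (f ∘ Ψ)) :
    ∀ x : EuclideanSpace ℝ (Fin d), fderiv ℝ f x = 0 → f x = ⨅ x', f x' := by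
  intro x hx
  obtain ⟨ν, rfl⟩ := hΨsurj x
  have hcomp : HasFDerivAt (f ∘ Ψ) (0 : _ →L[ℝ] ℝ) ν := by
    simpa [hx] using (hf (Ψ ν)).hasFDerivAt.comp ν (hΨ ν).hasFDerivAt
  have hmin : ∀ x', f (Ψ ν) ≤ f x' := hΨsurj.forall.2 fun μ =>
    hconv.isMinOn_of_hasFDerivAt_eq_zero (mem_univ ν) hcomp (mem_univ μ)
  exact (IsLeast.isGLB ⟨mem_range_self _, forall_mem_range.2 hmin⟩).ciInf_eq.symm

/-- If `f : ℝ^d → ℝ` is differentiable and bounded below, and there is a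
differentiable surjection `Ψ : ℝ^{nν} → ℝ^d` such that `f ∘ Ψ` is convex, then every
first-order stationary point of `f` is a global minimizer. -/
theorem stmt_0 {d nν : ℕ} (f : EuclideanSpace ℝ (Fin d) → ℝ)
    (hf : Differentiable ℝ f) (hbdd : BddBelow (Set.range f))
    (Ψ : EuclideanSpace ℝ (Fin nν) → EuclideanSpace ℝ (Fin d))
    (hΨ : Differentiable ℝ Ψ) (hΨsurj : Function.Surjective Ψ)
    (hconv : ConvexOn ℝ Set.univ (f ∘ Ψ)) :
    ∀ x : EuclideanSpace ℝ (Fin d), fderiv ℝ f x = 0 → f x = ⨅ x', f x' :=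
  stmt_0_general f hf Ψ hΨ hΨsurj hconv
end

section
/- Let f : ℝ^d → ℝ, let D_lft ⊆ ℝ^d × ℝ^m, and let f_lft : ℝ^d × ℝ^m → ℝ satisfy f(x') ≤ f_lft(x', ξ') for every (x', ξ') ∈ D_lft. Let x ∈ ℝ^d be a point at which f is Fréchet differentiable, and let ξ ∈ ℝ^m be such that (x, ξ) ∈ D_lft and f_lft(x, ξ) = f(x). Suppose there exist ε₀ > 0 and a continuously differentiable curve φ : [0, ε₀] → ℝ^d × ℝ^m with φ(ε) ∈ D_lft for all ε ∈ [0, ε₀], φ(0) = (x, ξ), and limsup_{ε → 0⁺} (f_lft(φ(ε)) − f_lft(x, ξ)) / ε ≤ −‖φ'(0)‖². Then ‖∇f(x)‖ ≥ ‖φ'(0)‖. -/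
open Filter Set Topology

set_option maxHeartbeats 2000000
set_option synthInstance.maxHeartbeats 4000000

/-!
Project the lifted curve to `x(ε) = (φ ε).1`. Partial minimization gives
`f (x ε) ≤ f_lft (φ ε)` with equality at `ε = 0`, so the right derivative `∇f(x) · x'(0)` of
`ε ↦ f (x ε)` is at most the upper right Dini derivative of `f_lft ∘ φ`, hence at most `-‖φ'(0)‖²`.
Cauchy–Schwarz and `‖x'(0)‖ ≤ ‖φ'(0)‖` then give `‖φ'(0)‖² ≤ ‖∇f(x)‖ ‖φ'(0)‖`.
-/

theorem Real.isBoundedUnder_le_of_limsup_ne_zero {α : Type*} {l : Filter α} {u : α → ℝ}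
    (h : limsup u l ≠ 0) : IsBoundedUnder (· ≤ ·) l u :=
  by_contra fun hu => h (Real.limsup_of_not_isBoundedUnder hu)

theorem HasDerivWithinAt.le_limsup_slope_of_eventually_le {ψ h : ℝ → ℝ} {D a : ℝ}
    (hψ : HasDerivWithinAt ψ D (Ici a) a) (hle : ∀ᶠ t in 𝓝[>] a, ψ t ≤ h t) (ha : ψ a = h a)
    (hb : IsBoundedUnder (· ≤ ·) (𝓝[>] a) (slope h a)) :
    D ≤ limsup (slope h a) (𝓝[>] a) := by
  have hslope : Tendsto (slope ψ a) (𝓝[>] a) (𝓝 D) :=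
    (hasDerivWithinAt_iff_tendsto_slope' (lt_irrefl a)).mp hψ.Ioi_of_Ici
  have hslope_le : slope ψ a ≤ᶠ[𝓝[>] a] slope h a := by
    filter_upwards [hle, self_mem_nhdsWithin] with t ht (hat : a < t)
    rw [slope_def_field, slope_def_field, ha]
    exact div_le_div_of_nonneg_right (by linarith) (sub_pos.2 hat).le
  exact hslope.limsup_eq ▸ limsup_le_limsup hslope_le hslope.isCoboundedUnder_le hb

theorem stmt_3_general {d m : ℕ}
    (f : EuclideanSpace ℝ (Fin d) → ℝ)
    (Dlft : Set (WithLp 2 (EuclideanSpace ℝ (Fin d) × EuclideanSpace ℝ (Fin m))))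
    (flft : WithLp 2 (EuclideanSpace ℝ (Fin d) × EuclideanSpace ℝ (Fin m)) → ℝ)
    (hlb : ∀ y ∈ Dlft,
      f ((WithLp.equiv 2 (EuclideanSpace ℝ (Fin d) × EuclideanSpace ℝ (Fin m)) y).1) ≤ flft y)
    (x : EuclideanSpace ℝ (Fin d)) (hfd : DifferentiableAt ℝ f x)
    (ξ : EuclideanSpace ℝ (Fin m))
    (heq : flft ((WithLp.equiv 2 (EuclideanSpace ℝ (Fin d) × EuclideanSpace ℝ (Fin m))).symm
      (x, ξ)) = f x)
    (ε₀ : ℝ) (hε₀ : 0 < ε₀)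
    (φ : ℝ → WithLp 2 (EuclideanSpace ℝ (Fin d) × EuclideanSpace ℝ (Fin m)))
    (hφmem : ∀ ε ∈ Set.Icc (0:ℝ) ε₀, φ ε ∈ Dlft)
    (hφ0 : φ 0 = (WithLp.equiv 2 (EuclideanSpace ℝ (Fin d) × EuclideanSpace ℝ (Fin m))).symm
      (x, ξ))
    (g : WithLp 2 (EuclideanSpace ℝ (Fin d) × EuclideanSpace ℝ (Fin m)))
    (hg : HasDerivWithinAt φ g (Set.Icc 0 ε₀) 0)
    (hlimsup : Filter.limsup
        (fun ε : ℝ => (flft (φ ε) -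
          flft ((WithLp.equiv 2 (EuclideanSpace ℝ (Fin d) × EuclideanSpace ℝ (Fin m))).symm
            (x, ξ))) / ε)
        (nhdsWithin 0 (Set.Ioi 0)) ≤ -‖g‖ ^ 2) :
    ‖g‖ ≤ ‖fderiv ℝ f x‖ := by
  rcases eq_or_ne g 0 with rfl | hg0
  · simp
  set π := WithLp.fstL 2 ℝ (EuclideanSpace ℝ (Fin d)) (EuclideanSpace ℝ (Fin m))
  set f' := fderiv ℝ f x
  have hπφ0 : π (φ 0) = x := by rw [hφ0]; rfl
  have hψ : HasDerivWithinAt (fun ε => f (π (φ ε))) (f' (π g)) (Ici 0) 0 := by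
    refine (HasFDerivAt.comp_hasDerivWithinAt 0 ?_ (π.hasFDerivAt.comp_hasDerivWithinAt 0 hg))
      |>.mono_of_mem_nhdsWithin (Icc_mem_nhdsGE hε₀)
    rw [Function.comp_apply, hπφ0]
    exact hfd.hasFDerivAt
  have hquot : (fun ε : ℝ => (flft (φ ε) - flft (φ 0)) / ε) = slope (flft ∘ φ) 0 := by
    ext ε; rw [slope_def_field, sub_zero]; rfl
  rw [← hφ0, hquot] at hlimsup
  have hle : ∀ᶠ ε in 𝓝[>] 0, f (π (φ ε)) ≤ (flft ∘ φ) ε := by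
    filter_upwards [Ioo_mem_nhdsGT hε₀] with ε hε
    exact hlb _ (hφmem ε (Ioo_subset_Icc_self hε))
  -- `-‖g‖² < 0` excludes the junk value `0` that `limsup` takes on an unbounded quotient.
  have hD : f' (π g) ≤ -‖g‖ ^ 2 :=
    (hψ.le_limsup_slope_of_eventually_le hle (by rw [hπφ0, Function.comp_apply, hφ0, heq])
      (Real.isBoundedUnder_le_of_limsup_ne_zero (by nlinarith [norm_pos_iff.2 hg0]))).trans
      hlimsup
  have hsq : ‖g‖ * ‖g‖ ≤ ‖f'‖ * ‖g‖ := calc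
    ‖g‖ * ‖g‖ ≤ -f' (π g) := by nlinarith
    _ ≤ ‖f'‖ * ‖π g‖ := (neg_le_abs _).trans (f'.le_opNorm (π g))
    _ ≤ ‖f'‖ * ‖g‖ := by gcongr; exact WithLp.norm_fst_le _ g
  exact le_of_mul_le_mul_right hsq (norm_pos_iff.2 hg0)

/-- If `f` arises by partial minimization from a lifted function `f_lft`
(with the minimum attained at `ξ`), `f` is differentiable at `x`, and `φ` is a `C¹` curve in
the lifted domain starting at `(x, ξ)` along which `f_lft` decreases at rate at least
`‖φ'(0)‖²`, then `‖∇f(x)‖ ≥ ‖φ'(0)‖`. -/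
theorem stmt_3 {d m : ℕ}
    (f : EuclideanSpace ℝ (Fin d) → ℝ)
    (Dlft : Set (WithLp 2 (EuclideanSpace ℝ (Fin d) × EuclideanSpace ℝ (Fin m))))
    (flft : WithLp 2 (EuclideanSpace ℝ (Fin d) × EuclideanSpace ℝ (Fin m)) → ℝ)
    (hlb : ∀ y ∈ Dlft,
      f ((WithLp.equiv 2 (EuclideanSpace ℝ (Fin d) × EuclideanSpace ℝ (Fin m)) y).1) ≤ flft y)
    (x : EuclideanSpace ℝ (Fin d)) (hfd : DifferentiableAt ℝ f x)
    (ξ : EuclideanSpace ℝ (Fin m))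
    (hmem : (WithLp.equiv 2 (EuclideanSpace ℝ (Fin d) × EuclideanSpace ℝ (Fin m))).symm (x, ξ)
      ∈ Dlft)
    (heq : flft ((WithLp.equiv 2 (EuclideanSpace ℝ (Fin d) × EuclideanSpace ℝ (Fin m))).symm
      (x, ξ)) = f x)
    (ε₀ : ℝ) (hε₀ : 0 < ε₀)
    (φ : ℝ → WithLp 2 (EuclideanSpace ℝ (Fin d) × EuclideanSpace ℝ (Fin m)))
    (hφC1 : ContDiffOn ℝ 1 φ (Set.Icc 0 ε₀))
    (hφmem : ∀ ε ∈ Set.Icc (0:ℝ) ε₀, φ ε ∈ Dlft)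
    (hφ0 : φ 0 = (WithLp.equiv 2 (EuclideanSpace ℝ (Fin d) × EuclideanSpace ℝ (Fin m))).symm
      (x, ξ))
    (g : WithLp 2 (EuclideanSpace ℝ (Fin d) × EuclideanSpace ℝ (Fin m)))
    (hg : HasDerivWithinAt φ g (Set.Icc 0 ε₀) 0)
    (hlimsup : Filter.limsup
        (fun ε : ℝ => (flft (φ ε) -
          flft ((WithLp.equiv 2 (EuclideanSpace ℝ (Fin d) × EuclideanSpace ℝ (Fin m))).symm
            (x, ξ))) / ε)
        (nhdsWithin 0 (Set.Ioi 0)) ≤ -‖g‖ ^ 2) :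
    ‖g‖ ≤ ‖fderiv ℝ f x‖ :=
  stmt_3_general f Dlft flft hlb x hfd ξ heq ε₀ hε₀ φ hφmem hφ0 g hg hlimsup
end

section
/- Let f : ℝ^d → ℝ be bounded below, let x₀ ∈ ℝ^d, and suppose the sublevel set K := {x : f(x) ≤ f(x₀)} is compact. Assume f is twice continuously differentiable on an open set containing K; that for all x ∈ K and all v ∈ ℝ^d the Hessian satisfies ⟨v, ∇²f(x) v⟩ ≤ β‖v‖² (β-upper-smoothness on K); and that ‖∇f(x)‖ ≥ α (f(x) − inf f) for all x ∈ K (α-weak-PL on K), where α, β > 0 and inf f := inf_{x ∈ ℝ^d} f(x). Then for any step size 0 < η ≤ 1/β, the gradient descent iterates x_{k+1} = x_k − η ∇f(x_k) started at x₀ satisfy f(x_k) − inf f ≤ 2 / (k α² η) for all k ≥ 1. -/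
/-!
Along the segment `t ↦ x - t η ∇f(x)`, `t ∈ [0, 1]`, the Hessian bound `β` and `ηβ ≤ 1` give the
descent lemma `f(x - η∇f(x)) ≤ f(x) - (η/2)‖∇f(x)‖²`. The bound on the Hessian is only known on
the sublevel set, so the segment must first be shown to stay in it; this is a continuous
induction: as long as `[0, t]` stays in the sublevel set, the directional derivative at `t` is at
most `-(1 - t) η‖∇f(x)‖² < 0`, so `f` keeps decreasing just beyond `t`.

With the weak-PL inequality the gaps `Δₖ = f(xₖ) - inf f` then satisfy
`Δₖ₊₁ ≤ Δₖ - (ηα²/2) Δₖ²`, which forces `(ηα²/2) k Δₖ ≤ 1`.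
-/

open Set Filter Topology

theorem HasDerivAt.eventually_nhdsGT_lt {φ : ℝ → ℝ} {φ' t : ℝ} (h : HasDerivAt φ φ' t)
    (hneg : φ' < 0) : ∀ᶠ s in 𝓝[>] t, φ s < φ t := by
  have hslope : ∀ᶠ s in 𝓝[>] t, slope φ t s < 0 :=
    (h.tendsto_slope.mono_left (nhdsGT_le_nhdsNE t)).eventually (gt_mem_nhds hneg)
  filter_upwards [hslope, self_mem_nhdsWithin] with s hs hts
  rw [slope_def_field, div_neg_iff] at hs
  rcases hs with ⟨-, h⟩ | ⟨h, -⟩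
  · linarith [mem_Ioi.1 hts]
  · linarith

theorem le_of_hasDerivAt_le_of_le {g g' B B' : ℝ → ℝ} {a b : ℝ}
    (hg : ∀ t ∈ Icc a b, HasDerivAt g (g' t) t) (hB : ∀ t ∈ Icc a b, HasDerivAt B (B' t) t)
    (ha : g a ≤ B a) (hle : ∀ t ∈ Ico a b, g' t ≤ B' t) : ∀ t ∈ Icc a b, g t ≤ B t :=
  image_le_of_deriv_right_le_deriv_boundary
    (fun t ht => (hg t ht).continuousAt.continuousWithinAt)
    (fun t ht => (hg t (Ico_subset_Icc_self ht)).hasDerivWithinAt) ha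
    (fun t ht => (hB t ht).continuousAt.continuousWithinAt)
    (fun t ht => (hB t (Ico_subset_Icc_self ht)).hasDerivWithinAt) hle

theorem le_add_mul_of_hasDerivAt_le {g g' : ℝ → ℝ} {a b M : ℝ}
    (hg : ∀ t ∈ Icc a b, HasDerivAt g (g' t) t) (hM : ∀ t ∈ Icc a b, g' t ≤ M) :
    ∀ t ∈ Icc a b, g t ≤ g a + M * (t - a) := by
  refine le_of_hasDerivAt_le_of_le hg (fun t _ => ?_) (by simp)
    (fun t ht => hM t (Ico_subset_Icc_self ht))
  simpa using (((hasDerivAt_id t).sub_const a).const_mul M).const_add (g a)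

theorem le_taylor_of_deriv2_le {φ φ' φ'' : ℝ → ℝ} {a b M : ℝ}
    (hφ : ∀ t ∈ Icc a b, HasDerivAt φ (φ' t) t) (hφ' : ∀ t ∈ Icc a b, HasDerivAt φ' (φ'' t) t)
    (hM : ∀ t ∈ Icc a b, φ'' t ≤ M) :
    ∀ t ∈ Icc a b, φ t ≤ φ a + φ' a * (t - a) + M / 2 * (t - a) ^ 2 := by
  refine le_of_hasDerivAt_le_of_le hφ (B' := fun t => φ' a + M * (t - a)) (fun t _ => ?_)
    (by simp) (fun t ht => le_add_mul_of_hasDerivAt_le hφ' hM t (Ico_subset_Icc_self ht))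
  have hlin : HasDerivAt (fun s : ℝ => s - a) 1 t := (hasDerivAt_id' t).sub_const a
  exact (((hlin.const_mul (φ' a)).const_add (φ a)).add ((hlin.pow 2).const_mul (M / 2))).congr_deriv
    (by push_cast; ring)

theorem le_taylor_one_of_deriv2_le_on_sublevel {φ φ' φ'' : ℝ → ℝ} {c M : ℝ}
    (hclosed : IsClosed {t | φ t ≤ c}) (h0 : φ 0 ≤ c)
    (hφ : ∀ t, φ t ≤ c → HasDerivAt φ (φ' t) t) (hφ' : ∀ t, φ t ≤ c → HasDerivAt φ' (φ'' t) t)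
    (hM : ∀ t, φ t ≤ c → φ'' t ≤ M) (hneg : φ' 0 < 0) (hnegM : φ' 0 + M ≤ 0) :
    φ 1 ≤ φ 0 + φ' 0 + M / 2 := by
  have hline : Icc (0 : ℝ) 1 ⊆ {t | φ t ≤ c} := by
    refine IsClosed.Icc_subset_of_forall_mem_nhdsGT_of_Icc_subset
      (hclosed.inter isClosed_Icc) h0 fun t ht hT => ?_
    have ht0 : t ∈ Icc 0 t := right_mem_Icc.2 ht.1
    have hslope := le_add_mul_of_hasDerivAt_le (fun s hs => hφ' s (hT hs))
      (fun s hs => hM s (hT hs)) t ht0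
    have hslope_neg : φ' t < 0 := by nlinarith [ht.1, ht.2]
    filter_upwards [(hφ t (hT ht0)).eventually_nhdsGT_lt hslope_neg] with s hs
    exact hs.le.trans (hT ht0)
  simpa using le_taylor_of_deriv2_le (fun t ht => hφ t (hline ht))
    (fun t ht => hφ' t (hline ht)) (fun t ht => hM t (hline ht)) 1 (right_mem_Icc.2 zero_le_one)

section Line

variable {E F : Type*} [NormedAddCommGroup E] [NormedSpace ℝ E]
  [NormedAddCommGroup F] [NormedSpace ℝ F]

theorem DifferentiableAt.hasDerivAt_comp_line {g : E → F} {x v : E} {t : ℝ}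
    (hg : DifferentiableAt ℝ g (x + t • v)) :
    HasDerivAt (fun s : ℝ => g (x + s • v)) (fderiv ℝ g (x + t • v) v) t := by
  have hline : HasDerivAt (fun s : ℝ => x + s • v) v t := by
    simpa using ((hasDerivAt_id t).smul_const v).const_add x
  exact hg.hasFDerivAt.comp_hasDerivAt t hline

theorem DifferentiableAt.hasDerivAt_fderiv_comp_line {f : E → ℝ} {x v : E} {t : ℝ}
    (hf : DifferentiableAt ℝ (fderiv ℝ f) (x + t • v)) :
    HasDerivAt (fun s : ℝ => fderiv ℝ f (x + s • v) v)
      (fderiv ℝ (fderiv ℝ f) (x + t • v) v v) t :=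
  (ContinuousLinearMap.apply ℝ ℝ v).hasFDerivAt.comp_hasDerivAt t hf.hasDerivAt_comp_line

end Line

theorem apply_sub_smul_gradient_le {E : Type*} [NormedAddCommGroup E] [InnerProductSpace ℝ E]
    [CompleteSpace E] {f : E → ℝ} {U : Set E} {c β η : ℝ} (hU : IsOpen U)
    (hKU : {y | f y ≤ c} ⊆ U) (hK : IsClosed {y | f y ≤ c}) (hf : ContDiffOn ℝ 2 f U)
    (hsmooth : ∀ y ∈ {y | f y ≤ c}, ∀ v : E, fderiv ℝ (fderiv ℝ f) y v v ≤ β * ‖v‖ ^ 2)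
    (hη : 0 < η) (hηβ : η * β ≤ 1) {x : E} (hx : f x ≤ c) :
    f (x - η • gradient f x) ≤ f x - η / 2 * ‖gradient f x‖ ^ 2 := by
  set g := gradient f x
  rcases eq_or_ne g 0 with hg | hg
  · simp [hg]
  set v : E := -(η • g)
  have hdiff : ∀ y ∈ U, DifferentiableAt ℝ f y := fun y hy =>
    (hf.differentiableOn two_ne_zero).differentiableAt (hU.mem_nhds hy)
  have hdiff2 : ∀ y ∈ U, DifferentiableAt ℝ (fderiv ℝ f) y := fun y hy =>
    ((hf.fderiv_of_isOpen hU (m := 1) le_rfl).differentiableOn one_ne_zero).differentiableAt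
      (hU.mem_nhds hy)
  have hslope0 : fderiv ℝ f x v = -(η * ‖g‖ ^ 2) := by
    simp [v, g, ← inner_gradient_left, inner_smul_right]
  have hM : β * ‖v‖ ^ 2 ≤ η * ‖g‖ ^ 2 := by
    rw [norm_neg, norm_smul, Real.norm_of_nonneg hη.le]
    nlinarith [mul_le_mul_of_nonneg_right hηβ (by positivity : 0 ≤ η * ‖g‖ ^ 2)]
  have htaylor := le_taylor_one_of_deriv2_le_on_sublevel (φ := fun t => f (x + t • v))
    (hK.preimage (by fun_prop)) (by simpa using hx)
    (fun t ht => (hdiff _ (hKU ht)).hasDerivAt_comp_line)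
    (fun t ht => (hdiff2 _ (hKU ht)).hasDerivAt_fderiv_comp_line)
    (fun t ht => (hsmooth _ ht v).trans hM)
    (by simp only [zero_smul, add_zero, hslope0]; exact neg_neg_of_pos (by positivity))
    (by simp [hslope0])
  have hx1 : x + (1 : ℝ) • v = x - η • g := by simp [v, sub_eq_add_neg]
  simp only [zero_smul, add_zero, hx1, hslope0] at htaylor
  linarith

theorem mul_le_one_of_le_sub_mul_sq {Δ : ℕ → ℝ} {c : ℝ} (hc : 0 ≤ c) (hΔ : ∀ k, 0 ≤ Δ k)
    (hrec : ∀ k, Δ (k + 1) ≤ Δ k - c * Δ k ^ 2) (k : ℕ) : c * k * Δ k ≤ 1 := by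
  induction k with
  | zero => simp
  | succ k ih =>
    have ha : 0 ≤ c * Δ k := mul_nonneg hc (hΔ k)
    have hk : (0 : ℝ) ≤ k := k.cast_nonneg
    have hstep := mul_le_mul_of_nonneg_left (hrec k) (by positivity : 0 ≤ c * (k + 1))
    push_cast
    nlinarith [mul_nonneg (sub_nonneg.2 ih) ha, mul_nonneg hk ha, sq_nonneg (c * Δ k - 1)]

theorem stmt_4_general {d : ℕ} (f : EuclideanSpace ℝ (Fin d) → ℝ)
    (hbdd : BddBelow (Set.range f))
    (x₀ : EuclideanSpace ℝ (Fin d))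
    (hKcompact : IsCompact {x | f x ≤ f x₀})
    (U : Set (EuclideanSpace ℝ (Fin d))) (hUopen : IsOpen U)
    (hKU : {x | f x ≤ f x₀} ⊆ U) (hfC2 : ContDiffOn ℝ 2 f U)
    (α β : ℝ) (hα : 0 < α)
    (hsmooth : ∀ x ∈ {x | f x ≤ f x₀}, ∀ v : EuclideanSpace ℝ (Fin d),
      fderiv ℝ (fderiv ℝ f) x v v ≤ β * ‖v‖ ^ 2)
    (hPL : ∀ x ∈ {x | f x ≤ f x₀},
      α * (f x - sInf (Set.range f)) ≤ ‖gradient f x‖)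
    (η : ℝ) (hη0 : 0 < η) (hηβ : η ≤ 1 / β)
    (x : ℕ → EuclideanSpace ℝ (Fin d)) (hx0 : x 0 = x₀)
    (hiter : ∀ k : ℕ, x (k + 1) = x k - η • gradient f (x k)) :
    ∀ k : ℕ, 1 ≤ k → f (x k) - sInf (Set.range f) ≤ 2 / (k * α ^ 2 * η) := by
  set m := sInf (Set.range f)
  have hm : ∀ y, m ≤ f y := fun y => csInf_le hbdd ⟨y, rfl⟩
  have hηβ' : η * β ≤ 1 := by
    rwa [← le_div_iff₀ (one_div_pos.mp (hη0.trans_le hηβ))]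
  have hstep : ∀ y, f y ≤ f x₀ →
      f (y - η • gradient f y) ≤ f y - η / 2 * ‖gradient f y‖ ^ 2 := fun y hy =>
    apply_sub_smul_gradient_le hUopen hKU hKcompact.isClosed hfC2 hsmooth hη0 hηβ' hy
  have hsublevel : ∀ k, f (x k) ≤ f x₀ := by
    intro k
    induction k with
    | zero => rw [hx0]
    | succ k ih =>
      rw [hiter]
      nlinarith [hstep _ ih, sq_nonneg ‖gradient f (x k)‖]
  have hrec : ∀ k, f (x (k + 1)) - m ≤ (f (x k) - m) - η * α ^ 2 / 2 * (f (x k) - m) ^ 2 := by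
    intro k
    have hgap : 0 ≤ α * (f (x k) - m) := mul_nonneg hα.le (sub_nonneg.2 (hm _))
    have hgrad := pow_le_pow_left₀ hgap (hPL _ (hsublevel k)) 2
    rw [hiter]
    nlinarith [hstep _ (hsublevel k)]
  intro k hk
  have hrate := mul_le_one_of_le_sub_mul_sq (by positivity) (fun k => sub_nonneg.2 (hm (x k)))
    hrec k
  have hk : (0 : ℝ) < k := by exact_mod_cast hk
  rw [le_div_iff₀ (by positivity)]
  linarith

/-- Gradient descent on a β-upper-smooth function satisfying the α-weak-PL
condition on a compact sublevel set converges at rate `O(1/k)` to the infimum. -/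
theorem stmt_4 {d : ℕ} (f : EuclideanSpace ℝ (Fin d) → ℝ)
    (hbdd : BddBelow (Set.range f))
    (x₀ : EuclideanSpace ℝ (Fin d))
    (hKcompact : IsCompact {x | f x ≤ f x₀})
    (U : Set (EuclideanSpace ℝ (Fin d))) (hUopen : IsOpen U)
    (hKU : {x | f x ≤ f x₀} ⊆ U) (hfC2 : ContDiffOn ℝ 2 f U)
    (α β : ℝ) (hα : 0 < α) (hβ : 0 < β)
    (hsmooth : ∀ x ∈ {x | f x ≤ f x₀}, ∀ v : EuclideanSpace ℝ (Fin d),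
      fderiv ℝ (fderiv ℝ f) x v v ≤ β * ‖v‖ ^ 2)
    (hPL : ∀ x ∈ {x | f x ≤ f x₀},
      α * (f x - sInf (Set.range f)) ≤ ‖gradient f x‖)
    (η : ℝ) (hη0 : 0 < η) (hηβ : η ≤ 1 / β)
    (x : ℕ → EuclideanSpace ℝ (Fin d)) (hx0 : x 0 = x₀)
    (hiter : ∀ k : ℕ, x (k + 1) = x k - η • gradient f (x k)) :
    ∀ k : ℕ, 1 ≤ k → f (x k) - sInf (Set.range f) ≤ 2 / (k * α ^ 2 * η) :=
  stmt_4_general f hbdd x₀ hKcompact U hUopen hKU hfC2 α β hα hsmooth hPL η hη0 hηβ x hx0 hiter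
end

section
/- Let X ∈ ℝ^{d×d} and let Y₀ ∈ ℝ^{d×d} be symmetric positive semidefinite, and suppose the integral Γ₀ := ∫₀^∞ exp(sX) Y₀ exp(sX)ᵀ ds converges. For t ≥ 0 set Γ₀^{[t]} := ∫₀^t exp(sX) Y₀ exp(sX)ᵀ ds and P₀(t) := exp(tX) Γ₀ exp(tX)ᵀ. Then: (a) P₀(t) = ∫_t^∞ exp(sX) Y₀ exp(sX)ᵀ ds for all t ≥ 0; (b) if Γ₀ ≠ 0, then for all s, t ≥ 0, P₀(s + t) ⪯ (1 − λ_min(Γ₀^{[s]})/‖Γ₀‖) · P₀(t) in the Loewner order; and (c) if Γ₀ is positive definite, then X is Hurwitz stable. -/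
/-!
Conjugation `M ↦ exp(tX) M exp(tX)ᵀ` is a linear semigroup in `t`, so it commutes with the
integral and shifts the integration variable: `P₀(t)` is the tail of `Γ₀` beyond `t`. Splitting
`Γ₀ = Γ₀^{[s]} + P₀(s)` and using `Γ₀^{[s]} ⪰ λ_min(Γ₀^{[s]}) I ⪰ (λ_min(Γ₀^{[s]}) / ‖Γ₀‖) Γ₀`,
conjugation by `exp(tX)` gives the contraction. For stability, a left eigenvector `w` of `X` with
eigenvalue `μ` turns `w* exp(sX) Y₀ exp(sX)ᵀ w` into `exp(2 Re μ s) w* Y₀ w`; positive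
definiteness of `Γ₀` makes `w* Y₀ w ≠ 0`, and then integrability on `(0, ∞)` forces `Re μ < 0`.
-/

open Matrix MeasureTheory

attribute [local instance] Matrix.normedAddCommGroup Matrix.normedSpace

/-- A real square matrix is Hurwitz stable if all eigenvalues of its complexification
have strictly negative real part. -/
def IsHurwitz {d : ℕ} (M : Matrix (Fin d) (Fin d) ℝ) : Prop :=
  ∀ μ ∈ spectrum ℂ (M.map (algebraMap ℝ ℂ)), μ.re < 0

/-- The ℓ²→ℓ² operator norm (largest singular value) of a real matrix. -/
noncomputable def opN {k l : Type*} [Fintype k] [Fintype l] [DecidableEq l]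
    (M : Matrix k l ℝ) : ℝ :=
  ‖LinearMap.toContinuousLinearMap (Matrix.toEuclideanLin M)‖

/-- The smallest eigenvalue of a symmetric real matrix, as the infimum of the
Rayleigh quotient over the unit sphere. -/
noncomputable def lamMin {k : Type*} [Fintype k] (M : Matrix k k ℝ) : ℝ :=
  sInf {r : ℝ | ∃ v : k → ℝ, v ⬝ᵥ v = 1 ∧ r = v ⬝ᵥ M.mulVec v}

-- Instance search pairs the entrywise topology of matrices with the `ContinuousENorm` of the
-- norm and fails to unify them; the statement supplies this instance explicitly.
noncomputable abbrev Matrix.continuousENorm {m n : Type*} [Fintype m] [Fintype n] :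
    ContinuousENorm (Matrix m n ℝ) :=
  SeminormedAddGroup.toContinuousENorm

attribute [local instance] Matrix.continuousENorm

section MatrixIntegral

variable {α : Type*} [MeasurableSpace α] {μ : Measure α} {m n : Type*} [Fintype m] [Fintype n]

theorem LinearMap.map_integral_of_finiteDimensional {E F : Type*} [NormedAddCommGroup E]
    [NormedSpace ℝ E] [FiniteDimensional ℝ E] [NormedAddCommGroup F] [NormedSpace ℝ F]
    [CompleteSpace F]
    (L : E →ₗ[ℝ] F) {f : α → E} (hf : Integrable f μ) :
    L (∫ x, f x ∂μ) = ∫ x, L (f x) ∂μ :=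
  (L.toContinuousLinearMap.integral_comp_comm hf).symm

theorem LinearMap.integrable_comp_of_finiteDimensional {E F : Type*} [NormedAddCommGroup E]
    [NormedSpace ℝ E] [FiniteDimensional ℝ E] [NormedAddCommGroup F] [NormedSpace ℝ F]
    (L : E →ₗ[ℝ] F) {f : α → E} (hf : Integrable f μ) : Integrable (fun x => L (f x)) μ :=
  L.toContinuousLinearMap.integrable_comp hf

theorem Matrix.transpose_integral (f : α → Matrix m n ℝ) :
    (∫ x, f x ∂μ)ᵀ = ∫ x, (f x)ᵀ ∂μ :=
  ((transposeLinearEquiv m n ℝ ℝ).toContinuousLinearEquiv.integral_comp_comm f).symm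

noncomputable def Matrix.dotProductMulVecₗ (v : m → ℝ) (w : n → ℝ) : Matrix m n ℝ →ₗ[ℝ] ℝ :=
  dotProductBilin ℝ ℝ v ∘ₗ (mulVecBilin ℝ ℝ).flip w

@[simp]
theorem Matrix.dotProductMulVecₗ_apply (v : m → ℝ) (w : n → ℝ) (M : Matrix m n ℝ) :
    dotProductMulVecₗ v w M = v ⬝ᵥ M *ᵥ w := rfl

theorem Matrix.posSemidef_integral {f : α → Matrix n n ℝ} (hf : Integrable f μ)
    (h : ∀ x, (f x).PosSemidef) : (∫ x, f x ∂μ).PosSemidef := by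
  refine .of_dotProduct_mulVec_nonneg ?_ fun v => ?_
  · rw [IsHermitian, conjTranspose_eq_transpose_of_trivial, transpose_integral]
    congr! 2 with x
    simpa only [conjTranspose_eq_transpose_of_trivial] using (h x).1.eq
  · rw [star_trivial, ← dotProductMulVecₗ_apply,
      (dotProductMulVecₗ v v).map_integral_of_finiteDimensional hf]
    exact integral_nonneg fun x => by simpa using (h x).dotProduct_mulVec_nonneg v

end MatrixIntegral

section Rayleigh

variable {n : Type*} [Fintype n]

theorem lamMin_mul_dotProduct_self_le {M : Matrix n n ℝ} (hM : M.PosSemidef) (v : n → ℝ) :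
    lamMin M * (v ⬝ᵥ v) ≤ v ⬝ᵥ M *ᵥ v := by
  obtain rfl | hv := eq_or_ne v 0
  · simp
  have hvv : 0 < v ⬝ᵥ v := by simpa using dotProduct_star_self_pos_iff.mpr hv
  set r := √(v ⬝ᵥ v)
  have hr : r ^ 2 = v ⬝ᵥ v := Real.sq_sqrt hvv.le
  have hr0 : r ≠ 0 := by positivity
  have hunit : r⁻¹ • v ⬝ᵥ r⁻¹ • v = 1 := by
    simp only [dotProduct_smul, smul_dotProduct, smul_eq_mul, ← hr]; field_simp
  have hbdd : BddBelow {x | ∃ u : n → ℝ, u ⬝ᵥ u = 1 ∧ x = u ⬝ᵥ M *ᵥ u} :=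
    ⟨0, by rintro _ ⟨u, -, rfl⟩; simpa using hM.dotProduct_mulVec_nonneg u⟩
  calc lamMin M * (v ⬝ᵥ v) ≤ (r⁻¹ • v ⬝ᵥ M *ᵥ (r⁻¹ • v)) * (v ⬝ᵥ v) :=
        mul_le_mul_of_nonneg_right (csInf_le hbdd ⟨_, hunit, rfl⟩) hvv.le
    _ = v ⬝ᵥ M *ᵥ v := by
        simp only [mulVec_smul, dotProduct_smul, smul_dotProduct, smul_eq_mul, ← hr]
        field_simp

theorem lamMin_nonneg {M : Matrix n n ℝ} (hM : M.PosSemidef) : 0 ≤ lamMin M :=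
  Real.sInf_nonneg <| by rintro _ ⟨v, -, rfl⟩; simpa using hM.dotProduct_mulVec_nonneg v

variable [DecidableEq n]

theorem dotProduct_mulVec_le_opN_mul (M : Matrix n n ℝ) (v : n → ℝ) :
    v ⬝ᵥ M *ᵥ v ≤ opN M * (v ⬝ᵥ v) := by
  set u : EuclideanSpace ℝ n := WithLp.toLp 2 v
  set L := LinearMap.toContinuousLinearMap (toEuclideanLin M)
  have hquad : v ⬝ᵥ M *ᵥ v = inner ℝ u (L u) := by
    simp [u, L, EuclideanSpace.inner_eq_star_dotProduct, dotProduct_comm]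
  have hnorm : v ⬝ᵥ v = ‖u‖ * ‖u‖ := by
    rw [← real_inner_self_eq_norm_mul_norm, EuclideanSpace.inner_eq_star_dotProduct]; simp [u]
  calc v ⬝ᵥ M *ᵥ v ≤ ‖u‖ * ‖L u‖ := hquad ▸ real_inner_le_norm u (L u)
    _ ≤ ‖u‖ * (‖L‖ * ‖u‖) := by gcongr; exact L.le_opNorm u
    _ = opN M * (v ⬝ᵥ v) := by rw [hnorm, opN]; ring

theorem opN_pos {M : Matrix n n ℝ} (hM : M ≠ 0) : 0 < opN M :=
  norm_pos_iff.mpr <| by simpa using hM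

theorem Matrix.PosSemidef.sub_lamMin_div_opN_smul {A B : Matrix n n ℝ} (hA : A.PosSemidef)
    (hB : B.IsHermitian) (hB0 : B ≠ 0) : (A - (lamMin A / opN B) • B).PosSemidef := by
  have hc : 0 ≤ lamMin A / opN B := div_nonneg (lamMin_nonneg hA) (opN_pos hB0).le
  refine .of_dotProduct_mulVec_nonneg (hA.1.sub (hB.smul (.all _))) fun v => ?_
  have hv := lamMin_mul_dotProduct_self_le hA v
  have hBv := mul_le_mul_of_nonneg_left (dotProduct_mulVec_le_opN_mul B v) hc
  rw [← mul_assoc, div_mul_cancel₀ _ (opN_pos hB0).ne'] at hBv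
  simp only [star_trivial, sub_mulVec, smul_mulVec, dotProduct_sub, dotProduct_smul, smul_eq_mul]
  linarith

end Rayleigh

theorem setIntegral_Ioi_comp_add_right {E : Type*} [NormedAddCommGroup E] [NormedSpace ℝ E]
    (f : ℝ → E) (t : ℝ) : ∫ x in Set.Ioi 0, f (x + t) = ∫ x in Set.Ioi t, f x := by
  have h := (measurePreserving_add_right volume t).setIntegral_preimage_emb
    (MeasurableEquiv.addRight t).measurableEmbedding f (Set.Ioi t)
  rwa [show (· + t) ⁻¹' Set.Ioi t = Set.Ioi 0 by ext; simp] at h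

section ExpConj

open NormedSpace

variable {n : Type*} [Fintype n] [DecidableEq n] {X Y : Matrix n n ℝ}

-- The paper's `P₀(t)` is `expConj X t Γ₀`.
noncomputable def expConj (X : Matrix n n ℝ) (t : ℝ) : Matrix n n ℝ →ₗ[ℝ] Matrix n n ℝ :=
  LinearMap.mulRight ℝ (exp (t • X))ᵀ ∘ₗ LinearMap.mulLeft ℝ (exp (t • X))

theorem expConj_apply (X : Matrix n n ℝ) (t : ℝ) (M : Matrix n n ℝ) :
    expConj X t M = exp (t • X) * M * (exp (t • X))ᵀ := rfl

theorem expConj_add (X : Matrix n n ℝ) (s t : ℝ) (M : Matrix n n ℝ) :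
    expConj X (s + t) M = expConj X t (expConj X s M) := by
  have hexp : exp ((s + t) • X) = exp (t • X) * exp (s • X) := by
    rw [add_comm, add_smul, Matrix.exp_add_of_commute]
    exact ((Commute.refl X).smul_left t).smul_right s
  simp only [expConj_apply, hexp, transpose_mul, Matrix.mul_assoc]

theorem Matrix.PosSemidef.expConj {M : Matrix n n ℝ} (hM : M.PosSemidef) (X : Matrix n n ℝ)
    (t : ℝ) : (expConj X t M).PosSemidef := by
  simpa [expConj_apply, conjTranspose_eq_transpose_of_trivial] using
    hM.mul_mul_conjTranspose_same (exp (t • X))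

theorem expConj_integral_Ioi (hint : IntegrableOn (fun s => expConj X s Y) (Set.Ioi 0))
    (t : ℝ) :
    expConj X t (∫ s in Set.Ioi 0, expConj X s Y) = ∫ s in Set.Ioi t, expConj X s Y := by
  simp only [(expConj X t).map_integral_of_finiteDimensional hint, ← expConj_add,
    setIntegral_Ioi_comp_add_right (fun s => expConj X s Y)]

theorem integral_Ioi_eq_integral_Ioc_add_expConj
    (hint : IntegrableOn (fun s => expConj X s Y) (Set.Ioi 0)) {s : ℝ} (hs : 0 ≤ s) :
    ∫ u in Set.Ioi 0, expConj X u Y =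
      (∫ u in Set.Ioc 0 s, expConj X u Y) + expConj X s (∫ u in Set.Ioi 0, expConj X u Y) := by
  rw [expConj_integral_Ioi hint, ← setIntegral_union (Set.Ioc_disjoint_Ioi le_rfl)
    measurableSet_Ioi (hint.mono_set Set.Ioc_subset_Ioi_self)
    (hint.mono_set (Set.Ioi_subset_Ioi hs)), Set.Ioc_union_Ioi_eq_Ioi hs]

theorem posSemidef_smul_expConj_sub_expConj_add (hY : Y.PosSemidef)
    (hint : IntegrableOn (fun s => expConj X s Y) (Set.Ioi 0))
    (hΓ : ∫ u in Set.Ioi 0, expConj X u Y ≠ 0) {s : ℝ} (hs : 0 ≤ s) (t : ℝ) :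
    ((1 - lamMin (∫ u in Set.Ioc 0 s, expConj X u Y) / opN (∫ u in Set.Ioi 0, expConj X u Y)) •
        expConj X t (∫ u in Set.Ioi 0, expConj X u Y) -
      expConj X (s + t) (∫ u in Set.Ioi 0, expConj X u Y)).PosSemidef := by
  have hsplit := integral_Ioi_eq_integral_Ioc_add_expConj hint hs
  set Γ := ∫ u in Set.Ioi 0, expConj X u Y
  set Γs := ∫ u in Set.Ioc 0 s, expConj X u Y
  set c := lamMin Γs / opN Γ
  have hΓpsd : Γ.PosSemidef := posSemidef_integral hint fun u => hY.expConj X u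
  have hΓspsd : Γs.PosSemidef :=
    posSemidef_integral (hint.mono_set Set.Ioc_subset_Ioi_self) fun u => hY.expConj X u
  have hEs : expConj X s Γ = Γ - Γs := by rw [eq_sub_iff_add_eq, add_comm, ← hsplit]
  have hkey : (1 - c) • expConj X t Γ - expConj X (s + t) Γ = expConj X t (Γs - c • Γ) := by
    rw [expConj_add, hEs, map_sub, map_sub, map_smul]
    module
  rw [hkey]
  exact (hΓspsd.sub_lamMin_div_opN_smul hΓpsd.1 hΓ).expConj X t

end ExpConj

section Complexification

open NormedSpace

variable {n : Type*} [Fintype n]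

theorem star_dotProduct_map_conj_mulVec {E : Matrix n n ℝ} {w : n → ℂ} {c : ℂ}
    (h : Eᵀ.map (algebraMap ℝ ℂ) *ᵥ w = c • w) (M : Matrix n n ℝ) :
    star w ⬝ᵥ (E * M * Eᵀ).map (algebraMap ℝ ℂ) *ᵥ w =
      Complex.normSq c * (star w ⬝ᵥ M.map (algebraMap ℝ ℂ) *ᵥ w) := by
  have hstar : star w ᵥ* E.map (algebraMap ℝ ℂ) = star (c • w) := by
    rw [← h, star_mulVec, ← conjTranspose_map _ algebraMap_star_comm,
      conjTranspose_eq_transpose_of_trivial, transpose_transpose]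
  simp only [Matrix.map_mul, ← mulVec_mulVec, h, dotProduct_mulVec _ (E.map _), hstar]
  rw [star_smul, mulVec_smul, smul_dotProduct, dotProduct_smul, smul_eq_mul, smul_eq_mul,
    ← mul_assoc, Complex.normSq_eq_conj_mul_self]
  rfl

theorem re_star_dotProduct_map_mulVec (M : Matrix n n ℝ) (w : n → ℂ) :
    (star w ⬝ᵥ M.map (algebraMap ℝ ℂ) *ᵥ w).re =
      (fun i => (w i).re) ⬝ᵥ M *ᵥ (fun i => (w i).re) +
        (fun i => (w i).im) ⬝ᵥ M *ᵥ (fun i => (w i).im) := by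
  simp only [dotProduct, mulVec, Finset.mul_sum, Complex.re_sum, ← Finset.sum_add_distrib]
  refine Finset.sum_congr rfl fun i _ => Finset.sum_congr rfl fun j _ => ?_
  simp

theorem Matrix.PosDef.re_star_dotProduct_map_mulVec_pos {M : Matrix n n ℝ} (hM : M.PosDef)
    {w : n → ℂ} (hw : w ≠ 0) : 0 < (star w ⬝ᵥ M.map (algebraMap ℝ ℂ) *ᵥ w).re := by
  have hquad (v : n → ℝ) : 0 ≤ v ⬝ᵥ M *ᵥ v := by
    simpa using hM.posSemidef.dotProduct_mulVec_nonneg v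
  have hpos {v : n → ℝ} (hv : v ≠ 0) : 0 < v ⬝ᵥ M *ᵥ v := by
    simpa using hM.dotProduct_mulVec_pos hv
  rw [re_star_dotProduct_map_mulVec]
  by_cases hre : (fun i => (w i).re) = 0
  · have him : (fun i => (w i).im) ≠ 0 := fun him =>
      hw <| funext fun i => Complex.ext (congrFun hre i) (congrFun him i)
    linarith [hquad fun i => (w i).re, hpos him]
  · linarith [hpos hre, hquad fun i => (w i).im]

variable [DecidableEq n]

theorem exists_transpose_mulVec_eq_smul_of_mem_spectrum {K : Type*} [Field K]
    {A : Matrix n n K} {μ : K} (h : μ ∈ spectrum K A) : ∃ w ≠ 0, Aᵀ *ᵥ w = μ • w := by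
  rw [spectrum.mem_iff, isUnit_iff_isUnit_det, isUnit_iff_ne_zero, not_not, ← det_transpose,
    transpose_sub, Algebra.algebraMap_eq_smul_one, transpose_smul, transpose_one] at h
  obtain ⟨w, hw0, hw⟩ := exists_mulVec_eq_zero_iff.mpr h
  refine ⟨w, hw0, ?_⟩
  rwa [sub_mulVec, smul_mulVec, one_mulVec, sub_eq_zero, eq_comm] at hw

theorem map_exp_mulVec_eq_smul {A : Matrix n n ℝ} {w : n → ℂ} {μ : ℂ}
    (h : A.map (algebraMap ℝ ℂ) *ᵥ w = μ • w) :
    (exp A).map (algebraMap ℝ ℂ) *ᵥ w = Complex.exp μ • w := by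
  let L : Matrix n n ℝ →ₗ[ℝ] n → ℂ :=
    { toFun := fun M => (algebraMap ℝ ℂ).mapMatrix M *ᵥ w
      map_add' := fun M N => by rw [map_add, add_mulVec]
      map_smul' := fun r M => by simp [Matrix.map_smul', smul_mulVec] }
  have hpow (k : ℕ) : L (A ^ k) = μ ^ k • w := by
    change (algebraMap ℝ ℂ).mapMatrix (A ^ k) *ᵥ w = _
    rw [map_pow]
    induction k with
    | zero => simp
    | succ k ih => rw [pow_succ', ← mulVec_mulVec, ih, mulVec_smul, RingHom.mapMatrix_apply, h,
        smul_smul, pow_succ]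
  -- The operator norm makes matrices a normed algebra with the same topology.
  have hA := open scoped Norms.Operator in
    (exp_series_hasSum_exp' (𝕂 := ℝ) A).mapL L.toContinuousLinearMap
  have hμ := (exp_series_hasSum_exp' (𝕂 := ℝ) μ).smul_const w
  rw [← Complex.exp_eq_exp_ℂ] at hμ
  refine hA.unique ?_
  simpa only [map_smul, LinearMap.coe_toContinuousLinearMap', hpow, smul_assoc] using hμ

theorem star_dotProduct_map_expConj_mulVec {X : Matrix n n ℝ} {w : n → ℂ} {μ : ℂ}
    (hw : Xᵀ.map (algebraMap ℝ ℂ) *ᵥ w = μ • w) (s : ℝ) (M : Matrix n n ℝ) :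
    star w ⬝ᵥ (expConj X s M).map (algebraMap ℝ ℂ) *ᵥ w =
      Real.exp (2 * μ.re * s) * (star w ⬝ᵥ M.map (algebraMap ℝ ℂ) *ᵥ w) := by
  have heig : (exp (s • X))ᵀ.map (algebraMap ℝ ℂ) *ᵥ w = Complex.exp (s * μ) • w := by
    rw [← exp_transpose, transpose_smul]
    apply map_exp_mulVec_eq_smul
    rw [Matrix.map_smul' _ _ _ (map_mul _), smul_mulVec, hw, smul_smul]
    rfl
  have hnormSq : Complex.normSq (Complex.exp (s * μ)) = Real.exp (2 * μ.re * s) := by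
    rw [Complex.normSq_eq_norm_sq, Complex.norm_exp, ← Real.exp_nat_mul, Complex.re_ofReal_mul]
    ring_nf
  rw [expConj_apply, star_dotProduct_map_conj_mulVec heig, hnormSq]

end Complexification

theorem not_integrableOn_exp_mul_Ioi {a : ℝ} (ha : 0 ≤ a) :
    ¬IntegrableOn (fun x => Real.exp (a * x)) (Set.Ioi 0) := by
  intro h
  have hone : IntegrableOn (fun _ => (1 : ℝ)) (Set.Ioi (0 : ℝ)) :=
    h.mono' aestronglyMeasurable_const <| (ae_restrict_iff' measurableSet_Ioi).mpr <|
      .of_forall fun x (hx : 0 < x) => by simpa using Real.one_le_exp (mul_nonneg ha hx.le)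
  simp [integrableOn_const_iff] at hone

theorem isHurwitz_of_posDef_integral {d : ℕ} {X Y : Matrix (Fin d) (Fin d) ℝ}
    (hint : IntegrableOn (fun s => expConj X s Y) (Set.Ioi 0))
    (hΓ : (∫ s in Set.Ioi 0, expConj X s Y).PosDef) : IsHurwitz X := by
  intro μ hμ
  obtain ⟨w, hw0, hw⟩ := exists_transpose_mulVec_eq_smul_of_mem_spectrum hμ
  rw [← transpose_map] at hw
  let q : Matrix (Fin d) (Fin d) ℝ →ₗ[ℝ] ℝ :=
    dotProductMulVecₗ (fun i => (w i).re) (fun i => (w i).re) +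
      dotProductMulVecₗ (fun i => (w i).im) (fun i => (w i).im)
  have hq (M : Matrix (Fin d) (Fin d) ℝ) : q M = (star w ⬝ᵥ M.map (algebraMap ℝ ℂ) *ᵥ w).re :=
    (re_star_dotProduct_map_mulVec M w).symm
  have hq_expConj (s : ℝ) : q (expConj X s Y) = Real.exp (2 * μ.re * s) * q Y := by
    rw [hq, hq, star_dotProduct_map_expConj_mulVec hw, Complex.re_ofReal_mul]
  have hqΓ : q (∫ s in Set.Ioi 0, expConj X s Y) =
      ∫ s in Set.Ioi 0, Real.exp (2 * μ.re * s) * q Y := by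
    rw [q.map_integral_of_finiteDimensional hint]
    simp only [hq_expConj]
  have hq_int : IntegrableOn (fun s => Real.exp (2 * μ.re * s) * q Y) (Set.Ioi 0) := by
    have h := q.integrable_comp_of_finiteDimensional hint
    simp only [hq_expConj] at h
    exact h
  have hqY : q Y ≠ 0 := by
    intro h0
    have hpos := hΓ.re_star_dotProduct_map_mulVec_pos hw0
    rw [← hq, hqΓ, h0] at hpos
    simp at hpos
  by_contra! hre
  exact not_integrableOn_exp_mul_Ioi (by linarith)
    ((integrable_mul_const_iff (isUnit_iff_ne_zero.mpr hqY) _).mp hq_int)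

/-- Decay estimates for `P₀(t) = exp(tX) Γ₀ exp(tX)ᵀ` where
`Γ₀ = ∫₀^∞ exp(sX) Y₀ exp(sX)ᵀ ds`: (a) `P₀(t)` is the tail of the integral;
(b) a geometric contraction in the Loewner order; (c) positive definiteness of `Γ₀`
forces `X` to be Hurwitz stable. -/
theorem stmt_10 {d : ℕ} (X Y₀ : Matrix (Fin d) (Fin d) ℝ)
    (hY₀ : Y₀.PosSemidef)
    (hint : @IntegrableOn _ _ _ _ SeminormedAddGroup.toContinuousENorm
      (fun s : ℝ => NormedSpace.exp (s • X) * Y₀ * (NormedSpace.exp (s • X))ᵀ)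
      (Set.Ioi 0) volume) :
    (∀ t : ℝ, 0 ≤ t →
      NormedSpace.exp (t • X) *
          (∫ s in Set.Ioi (0:ℝ),
            NormedSpace.exp (s • X) * Y₀ * (NormedSpace.exp (s • X))ᵀ) *
          (NormedSpace.exp (t • X))ᵀ =
        ∫ s in Set.Ioi t,
          NormedSpace.exp (s • X) * Y₀ * (NormedSpace.exp (s • X))ᵀ) ∧
    ((∫ s in Set.Ioi (0:ℝ),
        NormedSpace.exp (s • X) * Y₀ * (NormedSpace.exp (s • X))ᵀ) ≠ 0 →
      ∀ s t : ℝ, 0 ≤ s → 0 ≤ t →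
        ((1 - lamMin (∫ u in Set.Ioc (0:ℝ) s,
              NormedSpace.exp (u • X) * Y₀ * (NormedSpace.exp (u • X))ᵀ) /
            opN (∫ u in Set.Ioi (0:ℝ),
              NormedSpace.exp (u • X) * Y₀ * (NormedSpace.exp (u • X))ᵀ)) •
            (NormedSpace.exp (t • X) *
              (∫ u in Set.Ioi (0:ℝ),
                NormedSpace.exp (u • X) * Y₀ * (NormedSpace.exp (u • X))ᵀ) *
              (NormedSpace.exp (t • X))ᵀ) -
          NormedSpace.exp ((s + t) • X) *
            (∫ u in Set.Ioi (0:ℝ),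
              NormedSpace.exp (u • X) * Y₀ * (NormedSpace.exp (u • X))ᵀ) *
            (NormedSpace.exp ((s + t) • X))ᵀ).PosSemidef) ∧
    ((∫ s in Set.Ioi (0:ℝ),
        NormedSpace.exp (s • X) * Y₀ * (NormedSpace.exp (s • X))ᵀ).PosDef →
      IsHurwitz X) := by
  refine ⟨fun t _ => expConj_integral_Ioi hint t, fun hΓ s t hs _ => ?_,
    isHurwitz_of_posDef_integral hint⟩
  exact posSemidef_smul_expConj_sub_expConj_add hY₀ hint hΓ hs t
end

section
/- Let X ∈ ℝ^{d×d} and let Y₀ ∈ ℝ^{d×d} be symmetric positive semidefinite such that Γ₀ := ∫₀^∞ exp(sX) Y₀ exp(sX)ᵀ ds converges. Suppose t > 0 is such that λ_min(Γ₀^{[t]}) > 0, where Γ₀^{[t]} := ∫₀^t exp(sX) Y₀ exp(sX)ᵀ ds. Then for every symmetric Y ∈ ℝ^{d×d}, the integral ∫₀^∞ exp(sX) Y exp(sX)ᵀ ds converges, and its operator norm is at most (t ‖Γ₀‖² / (λ_min(Γ₀) λ_min(Γ₀^{[t]}))) · ‖Y‖. -/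
open Matrix MeasureTheory

attribute [local instance] Matrix.normedAddCommGroup Matrix.normedSpace

/-!
Write `E s = exp (s • X)`, fix a vector `v` and put `w σ = (E σ)ᵀ v`. Since `E (s + σ) = E σ * E s`,
the finite-time Gramian seen from time `σ` is a shifted integral:
`λ_min(Γ₀^{[t]}) |w σ|² ≤ w σ ⬝ Γ₀^{[t]} w σ = ∫_σ^{σ+t} v ⬝ E s Y₀ (E s)ᵀ v ds`.
For the shifts `σ = τ + k t` these windows tile `[τ, ∞)`, so the sum over `k` of `|w (τ + k t)|²` is
at most `v ⬝ Γ₀ v / λ_min(Γ₀^{[t]})`; integrating over `τ ∈ [0, t]` gives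
`∫₀^∞ |w|² ≤ t ‖Γ₀‖ |v|² / λ_min(Γ₀^{[t]})`, and `λ_min(Γ₀) ≤ ‖Γ₀‖` turns this into the stated
constant. Finally, for any `Y` the bilinear form of `∫ E s Y (E s)ᵀ ds` at `(a, b)` is
`∫ (E sᵀ a) ⬝ Y (E sᵀ b) ds ≤ ‖Y‖ (∫ |E sᵀ a|² + ∫ |E sᵀ b|²) / 2`, which bounds its operator norm.
-/

open Set Filter NormedSpace WithLp

/- The sup norm on matrices is only a local instance here, and its topology is not reducibly the
product topology, so instance search finds neither of these on its own. -/
noncomputable local instance {ι : Type*} [Fintype ι] : ContinuousENorm (Matrix ι ι ℝ) :=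
  SeminormedAddGroup.toContinuousENorm

local instance {ι : Type*} [Fintype ι] : TopologicalSpace.PseudoMetrizableSpace (Matrix ι ι ℝ) :=
  inferInstanceAs (TopologicalSpace.PseudoMetrizableSpace (ι → ι → ℝ))

section Euclidean

variable {ι : Type*} [Fintype ι]

lemma norm_toLp_sq (a : ι → ℝ) : ‖toLp 2 a‖ ^ 2 = a ⬝ᵥ a := by
  rw [← real_inner_self_eq_norm_sq, EuclideanSpace.inner_toLp_toLp, star_trivial]

lemma dotProduct_self_nonneg (a : ι → ℝ) : 0 ≤ a ⬝ᵥ a := by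
  rw [← norm_toLp_sq]
  positivity

lemma entry_eq_single_dotProduct_mulVec_single [DecidableEq ι] (M : Matrix ι ι ℝ) (i j : ι) :
    M i j = Pi.single i 1 ⬝ᵥ M *ᵥ Pi.single j 1 := by
  simp

lemma dotProduct_mulVec_conj (A M : Matrix ι ι ℝ) (a b : ι → ℝ) :
    a ⬝ᵥ (A * M * Aᵀ) *ᵥ b = (Aᵀ *ᵥ a) ⬝ᵥ M *ᵥ (Aᵀ *ᵥ b) := by
  rw [← mulVec_mulVec, ← mulVec_mulVec, dotProduct_mulVec a, ← mulVec_transpose,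
    dotProduct_mulVec (Aᵀ *ᵥ a)]

end Euclidean

section OperatorNorm

variable {ι : Type*} [Fintype ι] [DecidableEq ι]

lemma opN_eq_norm_toEuclideanCLM (M : Matrix ι ι ℝ) :
    opN M = ‖toEuclideanCLM (𝕜 := ℝ) M‖ :=
  rfl

lemma opN_nonneg (M : Matrix ι ι ℝ) : 0 ≤ opN M :=
  norm_nonneg _

lemma inner_toLp_toEuclideanCLM (M : Matrix ι ι ℝ) (a b : ι → ℝ) :
    inner ℝ (toLp 2 a) (toEuclideanCLM (𝕜 := ℝ) M (toLp 2 b)) = a ⬝ᵥ M *ᵥ b :=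
  inner_toEuclideanCLM M _ _

lemma two_mul_abs_dotProduct_mulVec_le (M : Matrix ι ι ℝ) (a b : ι → ℝ) :
    2 * |a ⬝ᵥ M *ᵥ b| ≤ opN M * (a ⬝ᵥ a + b ⬝ᵥ b) := by
  rw [opN_eq_norm_toEuclideanCLM, ← inner_toLp_toEuclideanCLM, ← norm_toLp_sq, ← norm_toLp_sq]
  set T := toEuclideanCLM (𝕜 := ℝ) M
  have hT : |inner ℝ (toLp 2 a) (T (toLp 2 b))| ≤ ‖T‖ * (‖toLp 2 a‖ * ‖toLp 2 b‖) := by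
    rw [mul_left_comm]
    exact (abs_real_inner_le_norm _ _).trans
      (mul_le_mul_of_nonneg_left (T.le_opNorm _) (norm_nonneg _))
  nlinarith [two_mul_le_add_sq ‖toLp 2 a‖ ‖toLp 2 b‖, norm_nonneg T]

lemma dotProduct_mulVec_self_le (M : Matrix ι ι ℝ) (a : ι → ℝ) :
    a ⬝ᵥ M *ᵥ a ≤ opN M * (a ⬝ᵥ a) := by
  linarith [two_mul_abs_dotProduct_mulVec_le M a a, le_abs_self (a ⬝ᵥ M *ᵥ a)]

lemma opN_le_of_two_mul_dotProduct_mulVec_le {M : Matrix ι ι ℝ} {C : ℝ} (hC : 0 ≤ C)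
    (h : ∀ a b, 2 * (a ⬝ᵥ M *ᵥ b) ≤ C * (a ⬝ᵥ a + b ⬝ᵥ b)) : opN M ≤ C := by
  rw [opN_eq_norm_toEuclideanCLM]
  refine ContinuousLinearMap.opNorm_le_bound _ hC fun x => ?_
  set y := toEuclideanCLM (𝕜 := ℝ) M x
  rcases (norm_nonneg y).eq_or_lt with hy | hy
  · rw [← hy]
    positivity
  have hx : 0 < ‖x‖ := norm_pos_iff.2 fun hx => by simp [y, hx] at hy
  -- test the form against `(‖x‖ / ‖y‖) • y`, which has norm `‖x‖`
  have hnorm : ‖(‖x‖ / ‖y‖) • y‖ = ‖x‖ := by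
    rw [norm_smul, norm_div, norm_norm, norm_norm, div_mul_cancel₀ _ hy.ne']
  have hinner : inner ℝ ((‖x‖ / ‖y‖) • y) y = ‖x‖ * ‖y‖ := by
    rw [real_inner_smul_left, real_inner_self_eq_norm_sq]
    field_simp
  have key := h (ofLp ((‖x‖ / ‖y‖) • y)) (ofLp x)
  rw [← norm_toLp_sq, ← norm_toLp_sq, ← inner_toLp_toEuclideanCLM, toLp_ofLp, toLp_ofLp, hnorm,
    hinner] at key
  exact le_of_mul_le_mul_left (by nlinarith) hx

end OperatorNorm

section SmallestEigenvalue

variable {ι : Type*} [Fintype ι]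

lemma lamMin_of_isEmpty [IsEmpty ι] (M : Matrix ι ι ℝ) : lamMin M = 0 := by
  have : {r : ℝ | ∃ v : ι → ℝ, v ⬝ᵥ v = 1 ∧ r = v ⬝ᵥ M *ᵥ v} = ∅ := by
    ext r
    simp [dotProduct]
  rw [lamMin, this, Real.sInf_empty]

variable [DecidableEq ι]

lemma bddBelow_rayleigh (M : Matrix ι ι ℝ) :
    BddBelow {r : ℝ | ∃ v : ι → ℝ, v ⬝ᵥ v = 1 ∧ r = v ⬝ᵥ M *ᵥ v} := by
  refine ⟨-opN M, ?_⟩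
  rintro r ⟨v, hv, rfl⟩
  have h := two_mul_abs_dotProduct_mulVec_le M v v
  rw [hv] at h
  linarith [neg_abs_le (v ⬝ᵥ M *ᵥ v)]

lemma lamMin_le_dotProduct_mulVec (M : Matrix ι ι ℝ) {v : ι → ℝ} (hv : v ⬝ᵥ v = 1) :
    lamMin M ≤ v ⬝ᵥ M *ᵥ v :=
  csInf_le (bddBelow_rayleigh M) ⟨v, hv, rfl⟩

lemma lamMin_mul_dotProduct_le (M : Matrix ι ι ℝ) (u : ι → ℝ) :
    lamMin M * (u ⬝ᵥ u) ≤ u ⬝ᵥ M *ᵥ u := by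
  rcases eq_or_ne u 0 with rfl | hu
  · simp
  have hc : 0 < u ⬝ᵥ u := by simpa using dotProduct_self_star_pos_iff.2 hu
  have hr : (√(u ⬝ᵥ u))⁻¹ ^ 2 = (u ⬝ᵥ u)⁻¹ := by rw [inv_pow, Real.sq_sqrt hc.le]
  have h := lamMin_le_dotProduct_mulVec M (v := (√(u ⬝ᵥ u))⁻¹ • u) (by
    rw [smul_dotProduct, dotProduct_smul, smul_smul, ← sq, hr, smul_eq_mul, inv_mul_cancel₀ hc.ne'])
  rw [mulVec_smul, smul_dotProduct, dotProduct_smul, smul_smul, ← sq, hr, smul_eq_mul,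
    inv_mul_eq_div, le_div_iff₀ hc] at h
  exact h

lemma le_lamMin [Nonempty ι] {M : Matrix ι ι ℝ} {b : ℝ}
    (h : ∀ v : ι → ℝ, v ⬝ᵥ v = 1 → b ≤ v ⬝ᵥ M *ᵥ v) : b ≤ lamMin M := by
  obtain ⟨i⟩ := ‹Nonempty ι›
  refine le_csInf ⟨_, Pi.single i 1, by simp, rfl⟩ ?_
  rintro r ⟨v, hv, rfl⟩
  exact h v hv

lemma lamMin_mono [Nonempty ι] {A B : Matrix ι ι ℝ} (h : ∀ v, v ⬝ᵥ A *ᵥ v ≤ v ⬝ᵥ B *ᵥ v) :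
    lamMin A ≤ lamMin B :=
  le_lamMin fun v hv => (lamMin_le_dotProduct_mulVec A hv).trans (h v)

lemma lamMin_le_opN [Nonempty ι] (M : Matrix ι ι ℝ) : lamMin M ≤ opN M := by
  obtain ⟨i⟩ := ‹Nonempty ι›
  have hi : (Pi.single i 1 : ι → ℝ) ⬝ᵥ Pi.single i 1 = 1 := by simp
  simpa [hi] using (lamMin_le_dotProduct_mulVec M hi).trans (dotProduct_mulVec_self_le M _)

end SmallestEigenvalue

section RealIntegrals

variable {f : ℝ → ℝ}

lemma sum_intervalIntegral_add_nat_mul (hf : Continuous f) (τ t : ℝ) (N : ℕ) :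
    ∑ k ∈ Finset.range N, ∫ x in τ + k * t..τ + k * t + t, f x = ∫ x in τ..τ + N * t, f x := by
  have hadj := intervalIntegral.sum_integral_adjacent_intervals (f := f) (μ := volume)
    (a := fun k : ℕ => τ + k * t) (n := N) fun k _ => hf.intervalIntegrable _ _
  simpa only [Nat.cast_zero, zero_mul, add_zero, Nat.cast_succ, add_mul, one_mul,
    ← add_assoc] using hadj

lemma integral_nat_mul_eq_integral_sum_comp_add (hf : Continuous f) (t : ℝ) (N : ℕ) :
    ∫ x in 0..N * t, f x = ∫ x in 0..t, ∑ k ∈ Finset.range N, f (x + k * t) := by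
  rw [intervalIntegral.integral_finsetSum (f := fun (k : ℕ) x => f (x + k * t)) fun k _ =>
      (hf.comp (continuous_add_const _)).intervalIntegrable _ _,
    ← zero_add (N * t : ℝ), ← sum_intervalIntegral_add_nat_mul hf]
  refine Finset.sum_congr rfl fun k _ => ?_
  rw [intervalIntegral.integral_comp_add_right, zero_add, add_comm t]

lemma intervalIntegral_le_integral_Ioi {c a b : ℝ} (hca : c ≤ a) (hab : a ≤ b)
    (hf : IntegrableOn f (Ioi c)) (hf0 : ∀ x ∈ Ioi c, 0 ≤ f x) :
    ∫ x in a..b, f x ≤ ∫ x in Ioi c, f x := by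
  have hsub : Ioc a b ⊆ Ioi c := fun x hx => hca.trans_lt hx.1
  rw [intervalIntegral.integral_of_le hab]
  exact setIntegral_mono_set hf (ae_restrict_of_forall_mem measurableSet_Ioi hf0)
    hsub.eventuallyLE

lemma integrableOn_Ioi_and_integral_le_of_nat_mul {t B : ℝ} (hf : Continuous f)
    (hf0 : ∀ x, 0 ≤ f x) (ht : 0 < t) (hB : ∀ N : ℕ, ∫ x in 0..N * t, f x ≤ B) :
    IntegrableOn f (Ioi 0) ∧ ∫ x in Ioi 0, f x ≤ B := by
  have hbound : ∀ b, 0 ≤ b → ∫ x in 0..b, f x ≤ B := fun b hb =>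
    (intervalIntegral.integral_mono_interval le_rfl hb (Nat.le_ceil (b / t) |>
      (div_le_iff₀ ht).1) (ae_of_all _ hf0) (hf.intervalIntegrable _ _)).trans (hB _)
  have hint : IntegrableOn f (Ioi 0) := by
    refine integrableOn_Ioi_of_intervalIntegral_norm_bounded B 0
      (fun b => (hf.intervalIntegrable 0 b).1) tendsto_id ?_
    filter_upwards [eventually_ge_atTop 0] with b hb
    simpa only [id, Real.norm_of_nonneg (hf0 _)] using hbound b hb
  refine ⟨hint, le_of_tendsto (intervalIntegral_tendsto_integral_Ioi 0 hint tendsto_id) ?_⟩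
  filter_upwards [eventually_ge_atTop 0] with b hb using hbound b hb

end RealIntegrals

section QuadraticForms

variable {ι : Type*} [Fintype ι]

noncomputable def dotProductMulVecCLM (a b : ι → ℝ) : Matrix ι ι ℝ →L[ℝ] ℝ :=
  LinearMap.toContinuousLinearMap
    { toFun := fun M => a ⬝ᵥ M *ᵥ b
      map_add' := fun A B => by simp only [add_mulVec, dotProduct_add]
      map_smul' := fun c A => by simp only [smul_mulVec, dotProduct_smul, RingHom.id_apply] }

variable {α : Type*} [MeasurableSpace α] {μ : Measure α} {f : α → Matrix ι ι ℝ}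

lemma Integrable.dotProduct_mulVec (hf : Integrable f μ) (a b : ι → ℝ) :
    Integrable (fun x => a ⬝ᵥ f x *ᵥ b) μ :=
  (dotProductMulVecCLM a b).integrable_comp hf

lemma integral_dotProduct_mulVec (hf : Integrable f μ) (a b : ι → ℝ) :
    ∫ x, a ⬝ᵥ f x *ᵥ b ∂μ = a ⬝ᵥ (∫ x, f x ∂μ) *ᵥ b :=
  (dotProductMulVecCLM a b).integral_comp_comm hf

end QuadraticForms

section Exponential

variable {ι : Type*} [Fintype ι] [DecidableEq ι]

open scoped Matrix.Norms.Operator in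
lemma continuous_exp_smul (X : Matrix ι ι ℝ) : Continuous fun s : ℝ => exp (s • X) :=
  exp_continuous.comp (continuous_id.smul continuous_const)

lemma exp_add_smul (X : Matrix ι ι ℝ) (a b : ℝ) :
    exp ((a + b) • X) = exp (a • X) * exp (b • X) := by
  rw [add_smul, Matrix.exp_add_of_commute]
  exact ((Commute.refl X).smul_left a).smul_right b

end Exponential

section Lyapunov

variable {ι : Type*} [Fintype ι] [DecidableEq ι]

noncomputable def lyapunovIntegrand (X Y : Matrix ι ι ℝ) (s : ℝ) : Matrix ι ι ℝ :=
  exp (s • X) * Y * (exp (s • X))ᵀ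

variable (X Y : Matrix ι ι ℝ)

lemma continuous_lyapunovIntegrand : Continuous (lyapunovIntegrand X Y) :=
  ((continuous_exp_smul X).matrix_mul continuous_const).matrix_mul
    (continuous_exp_smul X).matrix_transpose

lemma lyapunovIntegrand_add (s σ : ℝ) :
    lyapunovIntegrand X Y (s + σ) = exp (σ • X) * lyapunovIntegrand X Y s * (exp (σ • X))ᵀ := by
  simp only [lyapunovIntegrand, add_comm s σ, exp_add_smul, transpose_mul, Matrix.mul_assoc]

lemma dotProduct_lyapunovIntegrand_mulVec (a b : ι → ℝ) (s : ℝ) :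
    a ⬝ᵥ lyapunovIntegrand X Y s *ᵥ b = ((exp (s • X))ᵀ *ᵥ a) ⬝ᵥ Y *ᵥ ((exp (s • X))ᵀ *ᵥ b) :=
  dotProduct_mulVec_conj _ _ _ _

lemma dotProduct_lyapunovIntegrand_mulVec_self_nonneg (hY : Y.PosSemidef) (v : ι → ℝ) (s : ℝ) :
    0 ≤ v ⬝ᵥ lyapunovIntegrand X Y s *ᵥ v := by
  rw [dotProduct_lyapunovIntegrand_mulVec]
  exact hY.dotProduct_mulVec_nonneg _

end Lyapunov

section Gramian

variable {ι : Type*} [Fintype ι] [DecidableEq ι]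

noncomputable def lyapunovGramian (X Y : Matrix ι ι ℝ) (S : Set ℝ) : Matrix ι ι ℝ :=
  ∫ s in S, lyapunovIntegrand X Y s

lemma dotProduct_lyapunovGramian_Ioc_le {X Y₀ : Matrix ι ι ℝ} (hY₀ : Y₀.PosSemidef)
    (hint : IntegrableOn (lyapunovIntegrand X Y₀) (Ioi 0)) {t : ℝ} (ht : 0 ≤ t) (v : ι → ℝ) :
    v ⬝ᵥ lyapunovGramian X Y₀ (Ioc 0 t) *ᵥ v ≤
      v ⬝ᵥ lyapunovGramian X Y₀ (Ioi 0) *ᵥ v := by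
  rw [lyapunovGramian, lyapunovGramian, ← integral_dotProduct_mulVec hint,
    ← integral_dotProduct_mulVec (hint.mono_set Ioc_subset_Ioi_self),
    ← intervalIntegral.integral_of_le ht]
  exact intervalIntegral_le_integral_Ioi le_rfl ht (Integrable.dotProduct_mulVec hint v v)
    fun s _ => dotProduct_lyapunovIntegrand_mulVec_self_nonneg X Y₀ hY₀ v s

lemma dotProduct_lyapunovGramian_Ioc_mulVec_exp_transpose (X Y₀ : Matrix ι ι ℝ) {t : ℝ}
    (ht : 0 ≤ t) (v : ι → ℝ) (σ : ℝ) :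
    ((exp (σ • X))ᵀ *ᵥ v) ⬝ᵥ lyapunovGramian X Y₀ (Ioc 0 t) *ᵥ ((exp (σ • X))ᵀ *ᵥ v) =
      ∫ s in σ..σ + t, v ⬝ᵥ lyapunovIntegrand X Y₀ s *ᵥ v := by
  have hshift := intervalIntegral.integral_comp_add_right (a := 0) (b := t)
    (fun s => v ⬝ᵥ lyapunovIntegrand X Y₀ s *ᵥ v) σ
  rw [zero_add, add_comm t σ] at hshift
  rw [lyapunovGramian,
    ← integral_dotProduct_mulVec (continuous_lyapunovIntegrand X Y₀).integrableOn_Ioc,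
    ← intervalIntegral.integral_of_le ht, ← hshift]
  refine intervalIntegral.integral_congr fun s _ => ?_
  simp only [lyapunovIntegrand_add, dotProduct_mulVec_conj]

theorem integral_exp_transpose_mulVec_sq_le {X Y₀ : Matrix ι ι ℝ} (hY₀ : Y₀.PosSemidef)
    (hint : IntegrableOn (lyapunovIntegrand X Y₀) (Ioi 0)) {t m : ℝ} (ht : 0 < t) (hm : 0 < m)
    (hΓt : ∀ w, m * (w ⬝ᵥ w) ≤ w ⬝ᵥ lyapunovGramian X Y₀ (Ioc 0 t) *ᵥ w)
    (v : ι → ℝ) :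
    IntegrableOn (fun s : ℝ => ((exp (s • X))ᵀ *ᵥ v) ⬝ᵥ ((exp (s • X))ᵀ *ᵥ v)) (Ioi 0) ∧
      ∫ s in Ioi (0 : ℝ), ((exp (s • X))ᵀ *ᵥ v) ⬝ᵥ ((exp (s • X))ᵀ *ᵥ v) ≤
        t / m * (v ⬝ᵥ lyapunovGramian X Y₀ (Ioi 0) *ᵥ v) := by
  set Q := v ⬝ᵥ lyapunovGramian X Y₀ (Ioi 0) *ᵥ v
  set g : ℝ → ℝ := fun s => v ⬝ᵥ lyapunovIntegrand X Y₀ s *ᵥ v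
  set n : ℝ → ℝ := fun s => ((exp (s • X))ᵀ *ᵥ v) ⬝ᵥ ((exp (s • X))ᵀ *ᵥ v)
  have hg_cont : Continuous g :=
    (dotProductMulVecCLM v v).continuous.comp (continuous_lyapunovIntegrand X Y₀)
  have hn_cont : Continuous n := by
    have hE : Continuous fun s : ℝ => (exp (s • X))ᵀ *ᵥ v :=
      (continuous_exp_smul X).matrix_transpose.matrix_mulVec continuous_const
    exact hE.dotProduct hE
  have hfold : ∀ τ, 0 ≤ τ → ∀ N : ℕ, ∑ k ∈ Finset.range N, n (τ + k * t) ≤ Q / m := by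
    intro τ hτ N
    rw [le_div_iff₀ hm, Finset.sum_mul]
    calc ∑ k ∈ Finset.range N, n (τ + k * t) * m
        ≤ ∑ k ∈ Finset.range N, ∫ s in τ + k * t..τ + k * t + t, g s :=
          Finset.sum_le_sum fun k _ => by
            rw [mul_comm, ← dotProduct_lyapunovGramian_Ioc_mulVec_exp_transpose X Y₀ ht.le]
            exact hΓt _
      _ = ∫ s in τ..τ + N * t, g s := sum_intervalIntegral_add_nat_mul hg_cont τ t N
      _ ≤ ∫ s in Ioi 0, g s :=
          intervalIntegral_le_integral_Ioi hτ (le_add_of_nonneg_right (by positivity))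
            (Integrable.dotProduct_mulVec hint v v)
            fun s _ => dotProduct_lyapunovIntegrand_mulVec_self_nonneg X Y₀ hY₀ v s
      _ = Q := integral_dotProduct_mulVec hint v v
  refine integrableOn_Ioi_and_integral_le_of_nat_mul hn_cont
    (fun s => dotProduct_self_nonneg _) ht fun N => ?_
  rw [integral_nat_mul_eq_integral_sum_comp_add hn_cont]
  calc ∫ τ in 0..t, ∑ k ∈ Finset.range N, n (τ + k * t)
      ≤ ∫ τ in 0..t, Q / m :=
        intervalIntegral.integral_mono_on ht.le
          ((continuous_finsetSum _ fun k _ =>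
            hn_cont.comp (continuous_add_const _)).intervalIntegrable _ _)
          intervalIntegrable_const fun τ hτ => hfold τ hτ.1 N
    _ = t / m * Q := by
        rw [intervalIntegral.integral_const, smul_eq_mul, sub_zero, mul_div_assoc']
        ring

lemma lamMin_lyapunovGramian_Ioc_le [Nonempty ι] {X Y₀ : Matrix ι ι ℝ} (hY₀ : Y₀.PosSemidef)
    (hint : IntegrableOn (lyapunovIntegrand X Y₀) (Ioi 0)) {t : ℝ} (ht : 0 ≤ t) :
    lamMin (lyapunovGramian X Y₀ (Ioc 0 t)) ≤ lamMin (lyapunovGramian X Y₀ (Ioi 0)) :=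
  lamMin_mono (dotProduct_lyapunovGramian_Ioc_le hY₀ hint ht)

theorem integral_exp_transpose_mulVec_sq_le_of_lamMin_pos [Nonempty ι] {X Y₀ : Matrix ι ι ℝ}
    (hY₀ : Y₀.PosSemidef) (hint : IntegrableOn (lyapunovIntegrand X Y₀) (Ioi 0)) {t : ℝ}
    (ht : 0 < t) (hpos : 0 < lamMin (lyapunovGramian X Y₀ (Ioc 0 t))) (v : ι → ℝ) :
    IntegrableOn (fun s : ℝ => ((exp (s • X))ᵀ *ᵥ v) ⬝ᵥ ((exp (s • X))ᵀ *ᵥ v)) (Ioi 0) ∧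
      ∫ s in Ioi (0 : ℝ), ((exp (s • X))ᵀ *ᵥ v) ⬝ᵥ ((exp (s • X))ᵀ *ᵥ v) ≤
        t * opN (lyapunovGramian X Y₀ (Ioi 0)) ^ 2 / (lamMin (lyapunovGramian X Y₀ (Ioi 0)) *
          lamMin (lyapunovGramian X Y₀ (Ioc 0 t))) * (v ⬝ᵥ v) := by
  set Γ := lyapunovGramian X Y₀ (Ioi 0)
  set m := lamMin (lyapunovGramian X Y₀ (Ioc 0 t))
  have hL : 0 < lamMin Γ := hpos.trans_le (lamMin_lyapunovGramian_Ioc_le hY₀ hint ht.le)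
  obtain ⟨hv_int, hv_le⟩ := integral_exp_transpose_mulVec_sq_le hY₀ hint ht hpos
    (lamMin_mul_dotProduct_le _) v
  refine ⟨hv_int, hv_le.trans ?_⟩
  calc t / m * (v ⬝ᵥ Γ *ᵥ v)
      ≤ t / m * (opN Γ * (opN Γ / lamMin Γ) * (v ⬝ᵥ v)) := by
        gcongr
        refine (dotProduct_mulVec_self_le Γ v).trans
          (mul_le_mul_of_nonneg_right ?_ (dotProduct_self_nonneg v))
        exact le_mul_of_one_le_right (opN_nonneg Γ) ((one_le_div hL).2 (lamMin_le_opN Γ))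
    _ = t * opN Γ ^ 2 / (lamMin Γ * m) * (v ⬝ᵥ v) := by
        field_simp

end Gramian

section Transfer

variable {ι : Type*} [Fintype ι] [DecidableEq ι] {α : Type*} [MeasurableSpace α] {μ : Measure α}
  {E : α → Matrix ι ι ℝ}

lemma integrable_conj (hE : AEStronglyMeasurable E μ)
    (h : ∀ v, Integrable (fun x => ((E x)ᵀ *ᵥ v) ⬝ᵥ ((E x)ᵀ *ᵥ v)) μ) (Y : Matrix ι ι ℝ) :
    Integrable (fun x => E x * Y * (E x)ᵀ) μ := by
  refine Integrable.mono' ((integrable_finsetSum Finset.univ fun i _ =>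
    h (Pi.single i 1)).const_mul (opN Y)) ?_ (ae_of_all _ fun x => ?_)
  · exact ((continuous_id.matrix_mul continuous_const).matrix_mul
      continuous_id.matrix_transpose).comp_aestronglyMeasurable hE
  set n : ι → ℝ := fun i => ((E x)ᵀ *ᵥ Pi.single i 1) ⬝ᵥ ((E x)ᵀ *ᵥ Pi.single i 1)
  have hn : ∀ i, n i ≤ ∑ k, n k := fun i =>
    Finset.single_le_sum (f := n) (fun k _ => dotProduct_self_nonneg _) (Finset.mem_univ i)
  rw [Matrix.norm_le_iff <| mul_nonneg (opN_nonneg Y) <|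
    Finset.sum_nonneg fun k _ => dotProduct_self_nonneg _]
  intro i j
  have hij := two_mul_abs_dotProduct_mulVec_le Y ((E x)ᵀ *ᵥ Pi.single i 1)
    ((E x)ᵀ *ᵥ Pi.single j 1)
  rw [Real.norm_eq_abs, entry_eq_single_dotProduct_mulVec_single (E x * Y * (E x)ᵀ),
    dotProduct_mulVec_conj]
  nlinarith [hn i, hn j, opN_nonneg Y]

lemma opN_integral_conj_le {Y : Matrix ι ι ℝ} (hint : Integrable (fun x => E x * Y * (E x)ᵀ) μ)
    {K : ℝ} (hK : 0 ≤ K) (h : ∀ v, Integrable (fun x => ((E x)ᵀ *ᵥ v) ⬝ᵥ ((E x)ᵀ *ᵥ v)) μ ∧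
      ∫ x, ((E x)ᵀ *ᵥ v) ⬝ᵥ ((E x)ᵀ *ᵥ v) ∂μ ≤ K * (v ⬝ᵥ v)) :
    opN (∫ x, E x * Y * (E x)ᵀ ∂μ) ≤ K * opN Y := by
  refine opN_le_of_two_mul_dotProduct_mulVec_le (mul_nonneg hK (opN_nonneg Y)) fun a b => ?_
  rw [← integral_dotProduct_mulVec hint, ← integral_const_mul]
  calc ∫ x, 2 * (a ⬝ᵥ (E x * Y * (E x)ᵀ) *ᵥ b) ∂μ
      ≤ ∫ x, opN Y * (((E x)ᵀ *ᵥ a) ⬝ᵥ ((E x)ᵀ *ᵥ a) + ((E x)ᵀ *ᵥ b) ⬝ᵥ ((E x)ᵀ *ᵥ b)) ∂μ := by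
        refine integral_mono ((Integrable.dotProduct_mulVec hint a b).const_mul 2)
          (((h a).1.add (h b).1).const_mul _) fun x => ?_
        rw [dotProduct_mulVec_conj]
        exact (mul_le_mul_of_nonneg_left (le_abs_self _) two_pos.le).trans
          (two_mul_abs_dotProduct_mulVec_le Y _ _)
    _ = opN Y * (∫ x, ((E x)ᵀ *ᵥ a) ⬝ᵥ ((E x)ᵀ *ᵥ a) ∂μ +
          ∫ x, ((E x)ᵀ *ᵥ b) ⬝ᵥ ((E x)ᵀ *ᵥ b) ∂μ) := by
        rw [integral_const_mul, integral_add (h a).1 (h b).1]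
    _ ≤ opN Y * (K * (a ⬝ᵥ a) + K * (b ⬝ᵥ b)) := by
        gcongr
        exacts [opN_nonneg Y, (h a).2, (h b).2]
    _ = K * opN Y * (a ⬝ᵥ a + b ⬝ᵥ b) := by ring

end Transfer

/-- If `Γ₀ = ∫₀^∞ exp(sX) Y₀ exp(sX)ᵀ ds` converges for some PSD `Y₀`
and the finite-time Gramian `Γ₀^{[t]}` has positive smallest eigenvalue, then for every
symmetric `Y` the Lyapunov integral converges with operator norm at most
`(t ‖Γ₀‖²/(λ_min(Γ₀) λ_min(Γ₀^{[t]}))) ‖Y‖`. -/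
theorem stmt_11 {d : ℕ} (X Y₀ : Matrix (Fin d) (Fin d) ℝ)
    (hY₀ : Y₀.PosSemidef)
    (hint : @IntegrableOn ℝ (Matrix (Fin d) (Fin d) ℝ) _ _ SeminormedAddGroup.toContinuousENorm
      (fun s : ℝ => NormedSpace.exp (s • X) * Y₀ * (NormedSpace.exp (s • X))ᵀ)
      (Set.Ioi 0) volume)
    (Γ₀ : Matrix (Fin d) (Fin d) ℝ)
    (hΓ₀ : Γ₀ = ∫ s in Set.Ioi (0:ℝ),
      NormedSpace.exp (s • X) * Y₀ * (NormedSpace.exp (s • X))ᵀ)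
    (t : ℝ) (ht : 0 < t)
    (Γ₀t : Matrix (Fin d) (Fin d) ℝ)
    (hΓ₀t : Γ₀t = ∫ s in Set.Ioc (0:ℝ) t,
      NormedSpace.exp (s • X) * Y₀ * (NormedSpace.exp (s • X))ᵀ)
    (hpos : 0 < lamMin Γ₀t) :
    ∀ Y : Matrix (Fin d) (Fin d) ℝ, Y.IsSymm →
      @IntegrableOn ℝ (Matrix (Fin d) (Fin d) ℝ) _ _ SeminormedAddGroup.toContinuousENorm
        (fun s : ℝ => NormedSpace.exp (s • X) * Y * (NormedSpace.exp (s • X))ᵀ)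
        (Set.Ioi 0) volume ∧
      opN (∫ s in Set.Ioi (0:ℝ),
          NormedSpace.exp (s • X) * Y * (NormedSpace.exp (s • X))ᵀ) ≤
        t * opN Γ₀ ^ 2 / (lamMin Γ₀ * lamMin Γ₀t) * opN Y := by
  intro Y _
  have : Nonempty (Fin d) := by
    by_contra hd
    rw [not_nonempty_iff] at hd
    exact hpos.ne' (lamMin_of_isEmpty _)
  have hint' : IntegrableOn (lyapunovIntegrand X Y₀) (Ioi 0) := hint
  obtain rfl : Γ₀ = lyapunovGramian X Y₀ (Ioi 0) := hΓ₀
  obtain rfl : Γ₀t = lyapunovGramian X Y₀ (Ioc 0 t) := hΓ₀t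
  have hL := hpos.trans_le (lamMin_lyapunovGramian_Ioc_le hY₀ hint' ht.le)
  have hvec := integral_exp_transpose_mulVec_sq_le_of_lamMin_pos hY₀ hint' ht hpos
  have hint_Y :=
    integrable_conj (continuous_exp_smul X).aestronglyMeasurable (fun v => (hvec v).1) Y
  exact ⟨hint_Y, opN_integral_conj_le hint_Y (by positivity) hvec⟩
end

section
/- For natural numbers n and p, the function g(C, X) := tr(Cᵀ X⁻¹ C) is convex on the convex set {(C, X) ∈ ℝ^{n×p} × Sym(n) : X is positive definite}; that is, for all (C₁, X₁), (C₂, X₂) in this set and all θ ∈ [0,1], g(θC₁ + (1−θ)C₂, θX₁ + (1−θ)X₂) ≤ θ g(C₁, X₁) + (1−θ) g(C₂, X₂). -/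
/-!
`tr(Cᵀ X⁻¹ C)` is the supremum over `V` of the functions `2 tr(Vᵀ C) - tr(Vᵀ X V)`, which are
linear in `(C, X)`: completing the square, the gap is `tr(Wᵀ X W) ≥ 0` with `W = X⁻¹ C - V`, and
it vanishes at `V = X⁻¹ C`. A supremum of linear functions attained at every point is convex.
-/

open Matrix

theorem convexOn_of_tight_convex_minorants {𝕜 E β : Type*} [Semiring 𝕜] [PartialOrder 𝕜]
    [AddCommMonoid E] [SMul 𝕜 E] [AddCommMonoid β] [PartialOrder β] [IsOrderedAddMonoid β]
    [Module 𝕜 β] [PosSMulMono 𝕜 β] {s : Set E} {f : E → β} (hs : Convex 𝕜 s) (φ : E → E → β)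
    (hφ : ∀ x ∈ s, ConvexOn 𝕜 s (φ x)) (hle : ∀ x ∈ s, ∀ y ∈ s, φ x y ≤ f y)
    (heq : ∀ x ∈ s, φ x x = f x) : ConvexOn 𝕜 s f := by
  refine ⟨hs, fun x hx y hy a b ha hb hab => ?_⟩
  have hz := hs hx hy ha hb hab
  calc f (a • x + b • y) = φ (a • x + b • y) (a • x + b • y) := (heq _ hz).symm
    _ ≤ a • φ (a • x + b • y) x + b • φ (a • x + b • y) y := (hφ _ hz).2 hx hy ha hb hab
    _ ≤ a • f x + b • f y := by gcongr <;> exact hle _ hz _ ‹_›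

namespace Matrix

theorem convex_setOf_posDef {m : Type*} : Convex ℝ {X : Matrix m m ℝ | X.PosDef} := by
  intro A hA B hB a b ha hb hab
  rcases ha.eq_or_lt with rfl | ha
  · simpa [show b = 1 by linarith] using hB
  · exact (PosDef.smul hA ha).add_posSemidef (hB.posSemidef.smul hb)

variable {m k : Type*} [Fintype m] [Fintype k]

def traceMinorant (V : Matrix m k ℝ) : Matrix m k ℝ × Matrix m m ℝ →ₗ[ℝ] ℝ where
  toFun q := 2 * (Vᵀ * q.1).trace - (Vᵀ * q.2 * V).trace
  map_add' q r := by
    simp only [Prod.fst_add, Prod.snd_add, Matrix.mul_add, Matrix.add_mul, trace_add]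
    ring
  map_smul' c q := by
    simp only [Prod.smul_fst, Prod.smul_snd, Matrix.mul_smul, Matrix.smul_mul, trace_smul,
      smul_eq_mul, RingHom.id_apply]
    ring

theorem traceMinorant_apply (V C : Matrix m k ℝ) (X : Matrix m m ℝ) :
    traceMinorant V (C, X) = 2 * (Vᵀ * C).trace - (Vᵀ * X * V).trace :=
  rfl

theorem traceMinorant_le [DecidableEq m] {X : Matrix m m ℝ} (hX : X.PosDef)
    (C V : Matrix m k ℝ) :
    traceMinorant V (C, X) ≤ (Cᵀ * X⁻¹ * C).trace := by
  have hXinv : X * X⁻¹ = 1 := mul_nonsing_inv X ((isUnit_iff_isUnit_det X).mp hX.isUnit)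
  have hXinv' : X⁻¹ * X = 1 := nonsing_inv_mul X ((isUnit_iff_isUnit_det X).mp hX.isUnit)
  have hXinvT : X⁻¹ᵀ = X⁻¹ := by simpa using hX.inv.isHermitian.eq
  have hCV : (Cᵀ * V).trace = (Vᵀ * C).trace := by
    rw [← trace_transpose, transpose_mul, transpose_transpose]
  set W := X⁻¹ * C - V
  have hgap : (Wᵀ * X * W).trace
      = (Cᵀ * X⁻¹ * C).trace - 2 * (Vᵀ * C).trace + (Vᵀ * X * V).trace := by
    simp only [W, transpose_sub, transpose_mul, hXinvT, Matrix.sub_mul, Matrix.mul_sub,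
      Matrix.mul_assoc, ← Matrix.mul_assoc X X⁻¹, hXinv, hXinv', Matrix.one_mul,
      trace_sub, hCV]
    ring
  have hW : 0 ≤ (Wᵀ * X * W).trace := by
    simpa using (hX.posSemidef.conjTranspose_mul_mul_same W).trace_nonneg
  rw [traceMinorant_apply]
  linarith

theorem traceMinorant_inv_mul [DecidableEq m] {X : Matrix m m ℝ} (hX : X.PosDef)
    (C : Matrix m k ℝ) :
    traceMinorant (X⁻¹ * C) (C, X) = (Cᵀ * X⁻¹ * C).trace := by
  have hXinv : X * X⁻¹ = 1 := mul_nonsing_inv X ((isUnit_iff_isUnit_det X).mp hX.isUnit)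
  have hXinvT : X⁻¹ᵀ = X⁻¹ := by simpa using hX.inv.isHermitian.eq
  rw [traceMinorant_apply, transpose_mul, hXinvT, Matrix.mul_assoc _ X, ← Matrix.mul_assoc X,
    hXinv, Matrix.one_mul]
  ring

end Matrix

/-- The function `(C, X) ↦ tr(Cᵀ X⁻¹ C)` is convex on the convex set of
pairs whose second component is (symmetric) positive definite. -/
theorem stmt_18 (n p : ℕ) :
    ConvexOn ℝ
      {q : Matrix (Fin n) (Fin p) ℝ × Matrix (Fin n) (Fin n) ℝ | q.2.PosDef}
      (fun q => Matrix.trace (q.1ᵀ * q.2⁻¹ * q.1)) := by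
  have hs : Convex ℝ {q : Matrix (Fin n) (Fin p) ℝ × Matrix (Fin n) (Fin n) ℝ | q.2.PosDef} :=
    convex_setOf_posDef.linear_preimage (LinearMap.snd ℝ _ _)
  exact convexOn_of_tight_convex_minorants hs (fun x => traceMinorant (x.2⁻¹ * x.1))
    (fun _ _ => LinearMap.convexOn _ hs)
    (fun _ _ y hy => traceMinorant_le hy y.1 _)
    (fun x hx => traceMinorant_inv_mul hx x.1)
end

section
/- For a natural number n, the set D := {(M₁, M₂) ∈ Sym(n) × Sym(n) : M₁ is positive definite and M₂ − M₁⁻¹ is positive definite} is convex, and the function h(M₁, M₂) := tr((M₂ − M₁⁻¹)⁻¹) is convex on D; that is, for all (M₁, M₂), (M₁', M₂') ∈ D and all θ ∈ [0,1], h(θM₁ + (1−θ)M₁', θM₂ + (1−θ)M₂') ≤ θ h(M₁, M₂) + (1−θ) h(M₁', M₂'). -/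
/-!
Completing the square gives, for `A ≻ 0`, the variational formula
`x ⬝ᵥ A⁻¹ *ᵥ x = max_z (2 z ⬝ᵥ x - z ⬝ᵥ A *ᵥ z)`. The right-hand side is affine in `A`, so
`A ↦ x ⬝ᵥ A⁻¹ *ᵥ x` is convex on the positive definite cone; this makes the domain convex.
Applied to `S = M₂ - M₁⁻¹` the formula reads
`x ⬝ᵥ S⁻¹ *ᵥ x = max_y (2 y ⬝ᵥ x - y ⬝ᵥ M₂ *ᵥ y + y ⬝ᵥ M₁⁻¹ *ᵥ y)`, a maximum of functions that
are convex on the domain and attained at every point; the trace is the sum of these quadratic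
forms over the standard basis.
-/

open Matrix

section Convexity

variable {𝕜 E β ι : Type*} [Semiring 𝕜] [PartialOrder 𝕜] [AddCommMonoid E] [AddCommMonoid β]
  [PartialOrder β] [IsOrderedAddMonoid β] [SMul 𝕜 E] [Module 𝕜 β] {s : Set E}

theorem convexOn_of_forall_exists_convexOn_le_eq [PosSMulMono 𝕜 β] {f : E → β}
    (hs : Convex 𝕜 s)
    (h : ∀ x ∈ s, ∃ g : E → β, ConvexOn 𝕜 s g ∧ (∀ y ∈ s, g y ≤ f y) ∧ g x = f x) :
    ConvexOn 𝕜 s f := by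
  refine ⟨hs, fun x hx y hy a b ha hb hab => ?_⟩
  obtain ⟨g, hg, hgf, hgxy⟩ := h (a • x + b • y) (hs hx hy ha hb hab)
  calc f (a • x + b • y) = g (a • x + b • y) := hgxy.symm
    _ ≤ a • g x + b • g y := hg.2 hx hy ha hb hab
    _ ≤ a • f x + b • f y := by gcongr <;> exact hgf _ ‹_›

theorem ConvexOn.sum {t : Finset ι} {f : ι → E → β} (hs : Convex 𝕜 s)
    (h : ∀ i ∈ t, ConvexOn 𝕜 s (f i)) : ConvexOn 𝕜 s (∑ i ∈ t, f i) := by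
  classical
  induction t using Finset.induction_on with
  | empty => exact convexOn_const 0 hs
  | insert i t hi ih =>
    rw [Finset.sum_insert hi]
    exact (h i (t.mem_insert_self i)).add (ih fun j hj => h j (Finset.mem_insert_of_mem hj))

end Convexity

namespace Matrix

variable {n R : Type*}

theorem convex_setOf_posDef_s19 [Finite n] : Convex ℝ {A : Matrix n n ℝ | A.PosDef} :=
  convex_iff_forall_pos.mpr fun _ hA _ hB _ _ ha hb _ => (hA.smul ha).add (hB.smul hb)

theorem convexOn_const_sub_dotProduct_mulVec [Fintype n] {s : Set (Matrix n n ℝ)}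
    (hs : Convex ℝ s) (c : ℝ) (z : n → ℝ) : ConvexOn ℝ s fun A => c - z ⬝ᵥ A *ᵥ z := by
  refine ⟨hs, fun A _ B _ a b _ _ hab => le_of_eq ?_⟩
  simp only [add_mulVec, smul_mulVec, dotProduct_add, dotProduct_smul, smul_eq_mul]
  linear_combination -c * hab

variable [Fintype n] [DecidableEq n]

theorem IsSymm.two_mul_dotProduct_sub_dotProduct_mulVec [CommRing R] {A : Matrix n n R}
    (hA : A.IsSymm) (hdet : IsUnit A.det) (x z : n → R) :
    2 * (z ⬝ᵥ x) - z ⬝ᵥ A *ᵥ z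
      = x ⬝ᵥ A⁻¹ *ᵥ x - (z - A⁻¹ *ᵥ x) ⬝ᵥ A *ᵥ (z - A⁻¹ *ᵥ x) := by
  have hAy : A *ᵥ A⁻¹ *ᵥ x = x := by rw [mulVec_mulVec, mul_nonsing_inv A hdet, one_mulVec]
  have hsymm : A⁻¹ *ᵥ x ⬝ᵥ A *ᵥ z = z ⬝ᵥ x := by
    rw [dotProduct_mulVec, ← mulVec_transpose, hA.eq, dotProduct_comm, hAy]
  rw [mulVec_sub, dotProduct_sub, sub_dotProduct, sub_dotProduct, hsymm, hAy,
    dotProduct_comm (A⁻¹ *ᵥ x) x]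
  ring

theorem PosDef.two_mul_dotProduct_sub_le {A : Matrix n n ℝ} (hA : A.PosDef) (x z : n → ℝ) :
    2 * (z ⬝ᵥ x) - z ⬝ᵥ A *ᵥ z ≤ x ⬝ᵥ A⁻¹ *ᵥ x := by
  rw [(isHermitian_iff_isSymm.mp hA.1).two_mul_dotProduct_sub_dotProduct_mulVec
    hA.det_pos.ne'.isUnit x z, sub_le_self_iff]
  simpa using (posSemidef_iff_dotProduct_mulVec.mp hA.posSemidef).2 (z - A⁻¹ *ᵥ x)

theorem PosDef.two_mul_dotProduct_inv_mulVec_sub {A : Matrix n n ℝ} (hA : A.PosDef)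
    (x : n → ℝ) :
    2 * (A⁻¹ *ᵥ x ⬝ᵥ x) - A⁻¹ *ᵥ x ⬝ᵥ A *ᵥ A⁻¹ *ᵥ x = x ⬝ᵥ A⁻¹ *ᵥ x := by
  rw [mulVec_mulVec, mul_nonsing_inv A hA.det_pos.ne'.isUnit, one_mulVec, dotProduct_comm]
  ring

theorem convexOn_dotProduct_inv_mulVec (x : n → ℝ) :
    ConvexOn ℝ {A : Matrix n n ℝ | A.PosDef} fun A => x ⬝ᵥ A⁻¹ *ᵥ x :=
  convexOn_of_forall_exists_convexOn_le_eq convex_setOf_posDef_s19 fun _ hA =>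
    ⟨_, convexOn_const_sub_dotProduct_mulVec convex_setOf_posDef_s19 _ _,
      fun _ hB => hB.two_mul_dotProduct_sub_le x _, hA.two_mul_dotProduct_inv_mulVec_sub x⟩


theorem convex_posDef_sub_inv :
    Convex ℝ {q : Matrix n n ℝ × Matrix n n ℝ | q.1.PosDef ∧ (q.2 - q.1⁻¹).PosDef} := by
  rintro ⟨A, B⟩ ⟨hA, hS⟩ ⟨A', B'⟩ ⟨hA', hS'⟩ a b ha hb hab
  have hB : B.IsHermitian := by simpa using hS.1.add hA.1.inv
  have hB' : B'.IsHermitian := by simpa using hS'.1.add hA'.1.inv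
  have hAc : (a • A + b • A').PosDef := convex_setOf_posDef_s19 hA hA' ha hb hab
  refine ⟨hAc, posDef_iff_dotProduct_mulVec.mpr ⟨?_, fun x hx => ?_⟩⟩
  · exact ((hB.smul (.all a)).add (hB'.smul (.all b))).sub hAc.1.inv
  · have hinv := (convexOn_dotProduct_inv_mulVec x).2 hA hA' ha hb hab
    have hpos := convex_Ioi (0 : ℝ) (posDef_iff_dotProduct_mulVec.mp hS |>.2 hx)
      (posDef_iff_dotProduct_mulVec.mp hS' |>.2 hx) ha hb hab
    simp only [Prod.fst_add, Prod.snd_add, Prod.smul_fst, Prod.smul_snd, star_trivial,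
      sub_mulVec, add_mulVec, smul_mulVec, dotProduct_sub, dotProduct_add, dotProduct_smul,
      smul_eq_mul, Set.mem_Ioi] at hinv hpos ⊢
    linarith

theorem convexOn_dotProduct_inv_sub_inv_mulVec (x : n → ℝ) :
    ConvexOn ℝ {q : Matrix n n ℝ × Matrix n n ℝ | q.1.PosDef ∧ (q.2 - q.1⁻¹).PosDef}
      fun q => x ⬝ᵥ (q.2 - q.1⁻¹)⁻¹ *ᵥ x := by
  refine convexOn_of_forall_exists_convexOn_le_eq convex_posDef_sub_inv fun q hq => ?_
  set y := (q.2 - q.1⁻¹)⁻¹ *ᵥ x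
  have hconvex : ConvexOn ℝ _ fun p : Matrix n n ℝ × Matrix n n ℝ =>
      (2 * (y ⬝ᵥ x) - y ⬝ᵥ p.2 *ᵥ y) + y ⬝ᵥ p.1⁻¹ *ᵥ y :=
    ((((convexOn_const_sub_dotProduct_mulVec convex_univ _ y).comp_linearMap
      (LinearMap.snd ℝ _ _)).subset (Set.subset_univ _) convex_posDef_sub_inv).add
      (((convexOn_dotProduct_inv_mulVec y).comp_linearMap (LinearMap.fst ℝ _ _)).subset
        (fun _ hp => hp.1) convex_posDef_sub_inv))
  have hsplit (p : Matrix n n ℝ × Matrix n n ℝ) :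
      (2 * (y ⬝ᵥ x) - y ⬝ᵥ p.2 *ᵥ y) + y ⬝ᵥ p.1⁻¹ *ᵥ y
        = 2 * (y ⬝ᵥ x) - y ⬝ᵥ (p.2 - p.1⁻¹) *ᵥ y := by
    rw [sub_mulVec, dotProduct_sub]; ring
  refine ⟨_, hconvex, fun p hp => ?_, ?_⟩
  · rw [hsplit]; exact hp.2.two_mul_dotProduct_sub_le x y
  · rw [hsplit]; exact hq.2.two_mul_dotProduct_inv_mulVec_sub x

end Matrix

/-- The set of pairs `(M₁, M₂)` of symmetric matrices with `M₁ ≻ 0` and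
`M₂ − M₁⁻¹ ≻ 0` is convex, and `(M₁, M₂) ↦ tr((M₂ − M₁⁻¹)⁻¹)` is convex on it. -/
theorem stmt_19 (n : ℕ) :
    ConvexOn ℝ
      {q : Matrix (Fin n) (Fin n) ℝ × Matrix (Fin n) (Fin n) ℝ |
        q.1.PosDef ∧ (q.2 - q.1⁻¹).PosDef}
      (fun q => Matrix.trace ((q.2 - q.1⁻¹)⁻¹)) :=
  (ConvexOn.sum convex_posDef_sub_inv fun i (_ : i ∈ Finset.univ) =>
    convexOn_dotProduct_inv_sub_inv_mulVec (Pi.single i 1)).congr fun q _ => by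
      simp [trace]
end
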